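/- arXiv:1902.03355 — 5 statements merged into one kernel-verified Lean document; each statement's English description precedes it below -/
import Mathlib

section
/- Let T : ℝ^d → ℝ^d be L-Lipschitz continuous, 𝒳 ⊆ ℝ^d nonempty closed convex, α > 0, and X, A, B ∈ ℝ^d. Set Y = Π_𝒳(X − αA), X⁺ = Y + α(A − B), W = A − T(X), Z = B − T(Y). Then ‖X⁺ − X‖² ≤ (1 + 2L²α²)‖X − Y‖² + 4α²‖W‖² + 4α²‖Z‖² + 2α⟨A − B, Y − X⟩. -/
open scoped RealInnerProductSpace

/-- Step 3 estimate in the proof of the fundamental recursion lemma for the SFBF update. -/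
theorem stmt_1 {d : ℕ} (𝒳 : Set (EuclideanSpace ℝ (Fin d)))
    (h𝒳ne : 𝒳.Nonempty) (h𝒳cl : IsClosed 𝒳) (h𝒳cv : Convex ℝ 𝒳)
    (T : EuclideanSpace ℝ (Fin d) → EuclideanSpace ℝ (Fin d))
    (L : ℝ) (hLip : ∀ x y : EuclideanSpace ℝ (Fin d), ‖T x - T y‖ ≤ L * ‖x - y‖)
    (proj : EuclideanSpace ℝ (Fin d) → EuclideanSpace ℝ (Fin d))
    (hproj_mem : ∀ x, proj x ∈ 𝒳)
    (hproj_char : ∀ x, ∀ y ∈ 𝒳, ⟪x - proj x, y - proj x⟫ ≤ 0)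
    (α : ℝ) (hα : 0 < α)
    (X A B Y Xp W Z : EuclideanSpace ℝ (Fin d))
    (hY : Y = proj (X - α • A))
    (hXp : Xp = Y + α • (A - B))
    (hW : W = A - T X)
    (hZ : Z = B - T Y) :
    ‖Xp - X‖ ^ 2 ≤ (1 + 2 * L ^ 2 * α ^ 2) * ‖X - Y‖ ^ 2
      + 4 * α ^ 2 * ‖W‖ ^ 2 + 4 * α ^ 2 * ‖Z‖ ^ 2 + 2 * α * ⟪A - B, Y - X⟫ := by
  have hdiff : Xp - X = (Y - X) + α • (A - B) := by rw [hXp]; abel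
  have hexp : ‖Xp - X‖ ^ 2
      = ‖Y - X‖ ^ 2 + 2 * (α * ⟪A - B, Y - X⟫) + α ^ 2 * ‖A - B‖ ^ 2 := by
    rw [hdiff, norm_add_sq_real, real_inner_smul_right, norm_smul, real_inner_comm]
    simp [abs_of_pos hα, mul_pow]
  have hYX : ‖Y - X‖ = ‖X - Y‖ := by rw [norm_sub_rev]
  have hAB : A - B = (W - Z) + (T X - T Y) := by rw [hW, hZ]; abel
  have h1 : ‖A - B‖ ≤ ‖W - Z‖ + ‖T X - T Y‖ := by rw [hAB]; exact norm_add_le _ _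
  have h2 : ‖W - Z‖ ≤ ‖W‖ + ‖Z‖ := norm_sub_le _ _
  have h3 : ‖T X - T Y‖ ≤ L * ‖X - Y‖ := hLip X Y
  have hYX2 : ‖Y - X‖ ^ 2 = ‖X - Y‖ ^ 2 := by rw [hYX]
  have hTnn : (0:ℝ) ≤ L * ‖X - Y‖ := le_trans (norm_nonneg _) h3
  have hABle : ‖A - B‖ ≤ (‖W‖ + ‖Z‖) + L * ‖X - Y‖ := by linarith
  have hAB3 : ‖A - B‖ ^ 2 ≤ 2 * L ^ 2 * ‖X - Y‖ ^ 2 + 4 * ‖W‖ ^ 2 + 4 * ‖Z‖ ^ 2 := by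
    nlinarith [sq_nonneg (‖W‖ - ‖Z‖), sq_nonneg ((‖W‖ + ‖Z‖) - L * ‖X - Y‖),
      norm_nonneg (A - B), norm_nonneg W, norm_nonneg Z, hTnn]
  have hscaled : α ^ 2 * ‖A - B‖ ^ 2
      ≤ α ^ 2 * (2 * L ^ 2 * ‖X - Y‖ ^ 2 + 4 * ‖W‖ ^ 2 + 4 * ‖Z‖ ^ 2) :=
    mul_le_mul_of_nonneg_left hAB3 (sq_nonneg α)
  rw [hexp, hYX2]; ring_nf; ring_nf at hscaled; linarith
end

section
/- Let 𝒳 ⊆ ℝ^d be nonempty closed convex, T : ℝ^d → ℝ^d pseudo-monotone and L-Lipschitz, and x* ∈ 𝒳 a Stampacchia solution of VI(T,𝒳). Let 0 < α < 1/(√2 L), X, A, B ∈ ℝ^d, set Y = Π_𝒳(X − αA), X⁺ = Y + α(A − B), W = A − T(X), Z = B − T(Y), and ρ = 1 − 2L²α². Then ‖X⁺ − x*‖² ≤ ‖X − x*‖² − (ρ/2)·r_α(X)² + (4 + ρ)α²‖W‖² + 4α²‖Z‖² + 2α⟨Z, x* − Y⟩, where r_α(X) = ‖X − Π_𝒳(X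 − αT(X))‖. -/
open scoped RealInnerProductSpace
set_option maxHeartbeats 1000000

/-- The fundamental one-step recursion of the SFBF method, stated pointwise for one
iteration with oracle outputs `A`, `B`. -/
theorem stmt_3 {d : ℕ} (𝒳 : Set (EuclideanSpace ℝ (Fin d)))
    (h𝒳ne : 𝒳.Nonempty) (h𝒳cl : IsClosed 𝒳) (h𝒳cv : Convex ℝ 𝒳)
    (T : EuclideanSpace ℝ (Fin d) → EuclideanSpace ℝ (Fin d))
    (L : ℝ) (hL : 0 < L)
    (hLip : ∀ x y : EuclideanSpace ℝ (Fin d), ‖T x - T y‖ ≤ L * ‖x - y‖)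
    (hpm : ∀ x y : EuclideanSpace ℝ (Fin d), 0 ≤ ⟪T x, y - x⟫ → 0 ≤ ⟪T y, y - x⟫)
    (proj : EuclideanSpace ℝ (Fin d) → EuclideanSpace ℝ (Fin d))
    (hproj_mem : ∀ x, proj x ∈ 𝒳)
    (hproj_char : ∀ x, ∀ y ∈ 𝒳, ⟪x - proj x, y - proj x⟫ ≤ 0)
    (xs : EuclideanSpace ℝ (Fin d)) (hxs_mem : xs ∈ 𝒳)
    (hxs_sol : ∀ x ∈ 𝒳, 0 ≤ ⟪T xs, x - xs⟫)
    (α : ℝ) (hα : 0 < α) (hαL : Real.sqrt 2 * L * α < 1)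
    (X A B Y Xp W Z : EuclideanSpace ℝ (Fin d)) (ρ : ℝ)
    (hY : Y = proj (X - α • A))
    (hXp : Xp = Y + α • (A - B))
    (hW : W = A - T X)
    (hZ : Z = B - T Y)
    (hρ : ρ = 1 - 2 * L ^ 2 * α ^ 2) :
    ‖Xp - xs‖ ^ 2 ≤ ‖X - xs‖ ^ 2
      - (ρ / 2) * ‖X - proj (X - α • T X)‖ ^ 2
      + (4 + ρ) * α ^ 2 * ‖W‖ ^ 2 + 4 * α ^ 2 * ‖Z‖ ^ 2
      + 2 * α * ⟪Z, xs - Y⟫ := by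
  subst hρ
  have hρ0 : 0 ≤ 1 - 2 * L ^ 2 * α ^ 2 := by
    have h0 : 0 ≤ Real.sqrt 2 * L * α := by positivity
    nlinarith [Real.sq_sqrt (by norm_num : (0:ℝ) ≤ 2)]
  -- nonexpansiveness of proj
  have hne : ∀ u v, ‖proj u - proj v‖ ≤ ‖u - v‖ := by
    intro u v
    have h1 := hproj_char u (proj v) (hproj_mem v)
    have h2 := hproj_char v (proj u) (hproj_mem u)
    have key : ‖proj u - proj v‖ ^ 2 ≤ ⟪u - v, proj u - proj v⟫ := by
      have e : ⟪u - v, proj u - proj v⟫ =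
          -⟪u - proj u, proj v - proj u⟫ + ⟪proj u - proj v, proj u - proj v⟫
            - ⟪v - proj v, proj u - proj v⟫ := by
        simp only [inner_sub_left, inner_sub_right]
        ring
      rw [e, real_inner_self_eq_norm_sq]
      linarith
    have hc := real_inner_le_norm (u - v) (proj u - proj v)
    nlinarith [norm_nonneg (u - v), norm_nonneg (proj u - proj v)]
  have hYmem : Y ∈ 𝒳 := hY ▸ hproj_mem _
  -- pseudo-monotonicity consequence
  have hTY : ⟪T Y, xs - Y⟫ ≤ 0 := by
    have h1 : 0 ≤ ⟪T xs, Y - xs⟫ := hxs_sol Y hYmem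
    have h2 : 0 ≤ ⟪T Y, Y - xs⟫ := hpm xs Y h1
    have e : ⟪T Y, xs - Y⟫ = -⟪T Y, Y - xs⟫ := by
      rw [← inner_neg_right (𝕜 := ℝ)]
      congr 1
      abel
    rw [e]; linarith
  -- projection inequality at Y
  have hI3 : ⟪X - Y, xs - Y⟫ ≤ α * ⟪A, xs - Y⟫ := by
    have h := hproj_char (X - α • A) xs hxs_mem
    rw [← hY] at h
    have e : ⟪X - α • A - Y, xs - Y⟫ = ⟪X - Y, xs - Y⟫ - α * ⟪A, xs - Y⟫ := by
      have : X - α • A - Y = (X - Y) - α • A := by abel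
      rw [this, inner_sub_left, real_inner_smul_left]
    linarith [e ▸ h]
  -- E1
  have hXp' : Xp - xs = (Y - xs) + α • (A - B) := by rw [hXp]; abel
  have E1 : ‖Xp - xs‖ ^ 2 = ‖Y - xs‖ ^ 2 + 2 * α * ⟪A - B, Y - xs⟫ + α ^ 2 * ‖A - B‖ ^ 2 := by
    rw [hXp', norm_add_sq_real, real_inner_smul_right, norm_smul, Real.norm_eq_abs,
      abs_of_pos hα, real_inner_comm (Y - xs) (A - B)]
    ring
  -- E2
  have E2 : ‖Y - xs‖ ^ 2 = ‖X - xs‖ ^ 2 - ‖X - Y‖ ^ 2 + 2 * ⟪X - Y, xs - Y⟫ := by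
    have h : Y - xs = (X - xs) - (X - Y) := by abel
    rw [h, norm_sub_sq_real]
    have e : ⟪X - Y, xs - Y⟫ = ‖X - Y‖ ^ 2 - ⟪X - xs, X - Y⟫ := by
      calc ⟪X - Y, xs - Y⟫ = ⟪X - Y, (X - Y) - (X - xs)⟫ := by congr 1; abel
        _ = ‖X - Y‖ ^ 2 - ⟪X - xs, X - Y⟫ := by
            rw [inner_sub_right, real_inner_self_eq_norm_sq, real_inner_comm (X - Y) (X - xs)]
    rw [e]; ring
  -- E5
  have hB : B = T Y + Z := by rw [hZ]; abel
  have E5 : ⟪A - B, Y - xs⟫ = -⟪A, xs - Y⟫ + ⟪T Y, xs - Y⟫ + ⟪Z, xs - Y⟫ := by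
    have hx : Y - xs = -(xs - Y) := by abel
    rw [hB, hx, inner_neg_right (𝕜 := ℝ), inner_sub_left, inner_add_left]
    ring
  have E5'' : 2 * α * ⟪A - B, Y - xs⟫ =
      -(2 * α * ⟪A, xs - Y⟫) + 2 * α * ⟪T Y, xs - Y⟫ + 2 * α * ⟪Z, xs - Y⟫ := by
    linear_combination (2 * α) * E5
  have h2αt : 2 * α * ⟪T Y, xs - Y⟫ ≤ 0 := by nlinarith
  have h2αI3 : 2 * ⟪X - Y, xs - Y⟫ ≤ 2 * (α * ⟪A, xs - Y⟫) := by linarith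
  have key1 : 2 * α * ⟪A - B, Y - xs⟫ + 2 * ⟪X - Y, xs - Y⟫ ≤ 2 * α * ⟪Z, xs - Y⟫ := by
    nlinarith [E5'', h2αt, h2αI3]
  -- I6
  have hABdec : A - B = (T X - T Y) + (W - Z) := by rw [hW, hZ]; abel
  have I6 : ‖A - B‖ ^ 2 ≤ 2 * L ^ 2 * ‖X - Y‖ ^ 2 + 4 * ‖W‖ ^ 2 + 4 * ‖Z‖ ^ 2 := by
    have h1 : ‖A - B‖ ≤ ‖T X - T Y‖ + ‖W - Z‖ := hABdec ▸ norm_add_le _ _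
    have h2 : ‖W - Z‖ ≤ ‖W‖ + ‖Z‖ := norm_sub_le _ _
    have h3 := hLip X Y
    nlinarith [norm_nonneg (A - B), norm_nonneg (T X - T Y), norm_nonneg (W - Z),
      norm_nonneg W, norm_nonneg Z, norm_nonneg (X - Y), hL.le,
      sq_nonneg (‖T X - T Y‖ - ‖W - Z‖), sq_nonneg (‖W‖ - ‖Z‖)]
  -- I7
  have hYP : ‖Y - proj (X - α • T X)‖ ≤ α * ‖W‖ := by
    have h := hne (X - α • A) (X - α • T X)
    have e : (X - α • A) - (X - α • T X) = α • (T X - A) := by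
      rw [smul_sub]; abel
    rw [e, norm_smul, Real.norm_eq_abs, abs_of_pos hα] at h
    have e2 : ‖T X - A‖ = ‖W‖ := by rw [hW, norm_sub_rev]
    rw [e2] at h
    rw [hY]
    exact h
  have I7 : ‖X - proj (X - α • T X)‖ ^ 2 ≤ 2 * ‖X - Y‖ ^ 2 + 2 * α ^ 2 * ‖W‖ ^ 2 := by
    have tri : ‖X - proj (X - α • T X)‖ ≤ ‖X - Y‖ + ‖Y - proj (X - α • T X)‖ := by
      have e : X - proj (X - α • T X) = (X - Y) + (Y - proj (X - α • T X)) := by abel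
      rw [e]; exact norm_add_le _ _
    nlinarith [norm_nonneg (X - Y), norm_nonneg (Y - proj (X - α • T X)),
      norm_nonneg (X - proj (X - α • T X)), hYP,
      sq_nonneg (‖X - Y‖ - ‖Y - proj (X - α • T X)‖), hα.le, norm_nonneg W]
  -- assemble
  have hA2 : α ^ 2 * ‖A - B‖ ^ 2 ≤
      α ^ 2 * (2 * L ^ 2 * ‖X - Y‖ ^ 2 + 4 * ‖W‖ ^ 2 + 4 * ‖Z‖ ^ 2) :=
    mul_le_mul_of_nonneg_left I6 (sq_nonneg α)
  have hRr : ((1 - 2 * L ^ 2 * α ^ 2) / 2) * ‖X - proj (X - α • T X)‖ ^ 2 ≤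
      ((1 - 2 * L ^ 2 * α ^ 2) / 2) * (2 * ‖X - Y‖ ^ 2 + 2 * α ^ 2 * ‖W‖ ^ 2) :=
    mul_le_mul_of_nonneg_left I7 (by linarith)
  nlinarith [E1, E2, key1, hA2, hRr]
end

section
/- In the SFBF setup, for every solution x* ∈ 𝒳_* of VI(T,𝒳) and every n ≥ 0, P-almost surely E[‖X_{n+1} − x*‖² | F_n] ≤ ‖X_n − x*‖² − (ρ_n/2)·r_{α_n}(X_n)² + (κ_n/m_{n+1})·(σ₀²‖X_n − x*‖² + σ(x*)²), where ρ_n = 1 − 2L²α_n², κ_n = α_n² C₂² [2(4+ρ_n) + 16(1 + α_n L + α_n σ₀ G_{n,2})²], G_{n,2} = C₂/√(m_{n+1}), and C₂ is the Burkholder–Davis–Gundy constant for which the conditional oracle bounds E[‖W_{n+1}‖²|F_n]^{1/2} ≤ G_{n,2}(σ(x*)+σ₀‖X_n−x*‖) and E[‖Z_{n+1}‖²|F̂_n]^{1/2} ≤ G_{n,2}(σ(x*)+σ₀‖Y_n−x*‖) hold almost surely. -/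
open MeasureTheory
open scoped RealInnerProductSpace

/-!
Tseng's forward–backward–forward estimate, run pathwise with the oracle outputs
`A = T X + W` and `B = T Y + Z` in place of the exact operator values, bounds `‖X' - x*‖²` by
`‖X - x*‖² - ρ ‖X - Y‖² + 2α⟪Z, x* - Y⟫` plus multiples of `‖W‖²` and `‖Z‖²`, where
`ρ = 1 - 2L²α²`. Since the projection is nonexpansive, `r_α(X) ≤ ‖X - Y‖ + α‖W‖`, which trades
`‖X - Y‖²` for the residual. Conditioning on `F_n` kills the cross term (`Y` is `F̂_n`-measurable
and `E[Z | F̂_n] = 0`), and the tower property together with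
`‖Y - x*‖ ≤ (1 + αL)‖X - x*‖ + α‖W‖` turns the `F̂_n`-bound on `‖Z‖²` into an `F_n`-bound.
-/

structure IsMetricProjection {H : Type*} [NormedAddCommGroup H] [InnerProductSpace ℝ H]
    (K : Set H) (proj : H → H) : Prop where
  mem : ∀ x, proj x ∈ K
  inner_le : ∀ x, ∀ y ∈ K, ⟪x - proj x, y - proj x⟫ ≤ 0

namespace IsMetricProjection

variable {H : Type*} [NormedAddCommGroup H] [InnerProductSpace ℝ H] {K : Set H} {proj : H → H}

theorem eq_of_inner_le (hP : IsMetricProjection K proj) {x q : H} (hq : q ∈ K)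
    (hxq : ∀ y ∈ K, ⟪x - q, y - q⟫ ≤ 0) : proj x = q := by
  have h₁ := hP.inner_le x q hq
  have h₂ := hxq (proj x) (hP.mem x)
  have hsum : ⟪x - proj x, q - proj x⟫ + ⟪x - q, proj x - q⟫ = ‖proj x - q‖ ^ 2 := by
    rw [← real_inner_self_eq_norm_sq]
    simp only [inner_sub_left, inner_sub_right, real_inner_comm]
    ring
  rw [← sub_eq_zero, ← norm_eq_zero]
  nlinarith [norm_nonneg (proj x - q)]

theorem norm_sub_le (hP : IsMetricProjection K proj) (u v : H) :
    ‖proj u - proj v‖ ≤ ‖u - v‖ := by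
  have h₁ := hP.inner_le u (proj v) (hP.mem v)
  have h₂ := hP.inner_le v (proj u) (hP.mem u)
  have hsum : ⟪u - proj u, proj v - proj u⟫ + ⟪v - proj v, proj u - proj v⟫
      = ‖proj u - proj v‖ ^ 2 - ⟪u - v, proj u - proj v⟫ := by
    rw [← real_inner_self_eq_norm_sq]
    simp only [inner_sub_left, inner_sub_right, real_inner_comm]
    ring
  have hCS := real_inner_le_norm (u - v) (proj u - proj v)
  nlinarith [norm_nonneg (proj u - proj v), norm_nonneg (u - v)]

theorem continuous (hP : IsMetricProjection K proj) : Continuous proj :=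
  (LipschitzWith.of_dist_le' (K := 1) fun u v => by
    simpa [dist_eq_norm] using hP.norm_sub_le u v).continuous

end IsMetricProjection

theorem continuous_of_norm_sub_le_mul {E : Type*} [NormedAddCommGroup E] {T : E → E} {L : ℝ}
    (hT : ∀ x y, ‖T x - T y‖ ≤ L * ‖x - y‖) : Continuous T :=
  (LipschitzWith.of_dist_le' (K := L) fun x y => by simpa [dist_eq_norm] using hT x y).continuous

theorem norm_sub_sq_le_of_lipschitz {E : Type*} [NormedAddCommGroup E] {T : E → E} {L : ℝ}
    (hT : ∀ x y, ‖T x - T y‖ ≤ L * ‖x - y‖) (x y u v : E) :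
    ‖u - v‖ ^ 2 ≤ 2 * L ^ 2 * ‖x - y‖ ^ 2 + 4 * ‖u - T x‖ ^ 2 + 4 * ‖v - T y‖ ^ 2 := by
  have hsplit : u - v = (T x - T y) + ((u - T x) - (v - T y)) := by abel
  have h₁ : ‖u - v‖ ≤ L * ‖x - y‖ + (‖u - T x‖ + ‖v - T y‖) := by
    rw [hsplit]
    exact (norm_add_le _ _).trans (add_le_add (hT x y) (norm_sub_le _ _))
  have h₂ := pow_le_pow_left₀ (norm_nonneg _) h₁ 2
  nlinarith [sq_nonneg (L * ‖x - y‖ - (‖u - T x‖ + ‖v - T y‖)),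
    sq_nonneg (‖u - T x‖ - ‖v - T y‖)]

section ForwardBackwardForward

variable {H : Type*} [NormedAddCommGroup H] [InnerProductSpace ℝ H] {K : Set H} {proj : H → H}
  {T : H → H} {L a : ℝ} {x xs y u v : H}

theorem IsMetricProjection.apply_sub_smul_of_solution (hP : IsMetricProjection K proj)
    (hxs : xs ∈ K) (hsol : ∀ y ∈ K, 0 ≤ ⟪T xs, y - xs⟫) (ha : 0 ≤ a) :
    proj (xs - a • T xs) = xs :=
  hP.eq_of_inner_le hxs fun y hy => by
    rw [sub_sub_cancel_left, inner_neg_left, inner_smul_left]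
    simpa using mul_nonneg ha (hsol y hy)

theorem norm_proj_step_sub_le (hP : IsMetricProjection K proj)
    (hT : ∀ x y, ‖T x - T y‖ ≤ L * ‖x - y‖) (hxs : xs ∈ K)
    (hsol : ∀ y ∈ K, 0 ≤ ⟪T xs, y - xs⟫) (ha : 0 ≤ a) :
    ‖proj (x - a • u) - xs‖ ≤ (1 + a * L) * ‖x - xs‖ + a * ‖u - T x‖ := by
  conv_lhs => rw [← hP.apply_sub_smul_of_solution hxs hsol ha]
  have hsplit : x - a • u - (xs - a • T xs) = (x - xs) - a • (T x - T xs) - a • (u - T x) := by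
    simp only [smul_sub]; abel
  calc ‖proj (x - a • u) - proj (xs - a • T xs)‖
      ≤ ‖(x - xs) - a • (T x - T xs) - a • (u - T x)‖ := hsplit ▸ hP.norm_sub_le _ _
    _ ≤ ‖x - xs‖ + a * ‖T x - T xs‖ + a * ‖u - T x‖ := by
      refine (norm_sub_le _ _).trans (add_le_add ((norm_sub_le _ _).trans ?_) ?_) <;>
        simp [norm_smul, abs_of_nonneg ha]
    _ ≤ (1 + a * L) * ‖x - xs‖ + a * ‖u - T x‖ := by
      nlinarith [mul_le_mul_of_nonneg_left (hT x xs) ha]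

theorem norm_sub_proj_le_of_inexact (hP : IsMetricProjection K proj) (ha : 0 ≤ a) :
    ‖x - proj (x - a • T x)‖ ≤ ‖x - proj (x - a • u)‖ + a * ‖u - T x‖ :=
  calc ‖x - proj (x - a • T x)‖
      ≤ ‖x - proj (x - a • u)‖ + ‖proj (x - a • u) - proj (x - a • T x)‖ :=
        norm_sub_le_norm_sub_add_norm_sub _ _ _
    _ ≤ ‖x - proj (x - a • u)‖ + a * ‖u - T x‖ := by
      gcongr
      refine (hP.norm_sub_le _ _).trans_eq ?_
      rw [sub_sub_sub_cancel_left, ← smul_sub, norm_smul, Real.norm_eq_abs, abs_of_nonneg ha,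
        norm_sub_rev]

theorem fbf_step_sq_dist_le (hP : IsMetricProjection K proj)
    (hT : ∀ x y, ‖T x - T y‖ ≤ L * ‖x - y‖) (hxs : xs ∈ K)
    (hmin : ∀ y ∈ K, 0 ≤ ⟪T y, y - xs⟫) (ha : 0 ≤ a) (hy : y = proj (x - a • u)) :
    ‖y + a • (u - v) - xs‖ ^ 2 ≤ ‖x - xs‖ ^ 2 - (1 - 2 * L ^ 2 * a ^ 2) * ‖x - y‖ ^ 2
      + 2 * a * ⟪v - T y, xs - y⟫ + 4 * a ^ 2 * ‖u - T x‖ ^ 2 + 4 * a ^ 2 * ‖v - T y‖ ^ 2 := by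
  have hproj : ⟪x - a • u - y, xs - y⟫ ≤ 0 := hy ▸ hP.inner_le _ xs hxs
  have hTy : 0 ≤ a * ⟪T y, y - xs⟫ := mul_nonneg ha (hmin y (hy ▸ hP.mem _))
  have hdiff := mul_le_mul_of_nonneg_left (norm_sub_sq_le_of_lipschitz hT x y u v) (sq_nonneg a)
  have hexpand : ‖y + a • (u - v) - xs‖ ^ 2 = ‖x - xs‖ ^ 2 - ‖x - y‖ ^ 2
      + 2 * ⟪x - a • u - y, xs - y⟫ - 2 * (a * ⟪T y, y - xs⟫) + 2 * a * ⟪v - T y, xs - y⟫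
      + a ^ 2 * ‖u - v‖ ^ 2 := by
    simp only [← real_inner_self_eq_norm_sq, inner_add_left, inner_add_right, inner_sub_left,
      inner_sub_right, real_inner_smul_right, real_inner_comm]
    ring
  rw [hexpand]
  linarith

theorem fbf_step_sq_dist_le_residual (hP : IsMetricProjection K proj)
    (hT : ∀ x y, ‖T x - T y‖ ≤ L * ‖x - y‖) (hxs : xs ∈ K)
    (hmin : ∀ y ∈ K, 0 ≤ ⟪T y, y - xs⟫) (ha : 0 ≤ a) (hρ : 0 ≤ 1 - 2 * L ^ 2 * a ^ 2)
    (hy : y = proj (x - a • u)) :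
    ‖y + a • (u - v) - xs‖ ^ 2 ≤ ‖x - xs‖ ^ 2
      - ((1 - 2 * L ^ 2 * a ^ 2) / 2) * ‖x - proj (x - a • T x)‖ ^ 2
      + 2 * a * ⟪v - T y, xs - y⟫ + (4 + (1 - 2 * L ^ 2 * a ^ 2)) * a ^ 2 * ‖u - T x‖ ^ 2
      + 4 * a ^ 2 * ‖v - T y‖ ^ 2 := by
  have hstep := fbf_step_sq_dist_le (v := v) hP hT hxs hmin ha hy
  have hres := norm_sub_proj_le_of_inexact (T := T) hP ha (x := x) (u := u)
  rw [← hy] at hres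
  have hres' : ‖x - proj (x - a • T x)‖ ^ 2 ≤ 2 * ‖x - y‖ ^ 2 + 2 * a ^ 2 * ‖u - T x‖ ^ 2 := by
    nlinarith [norm_nonneg (x - proj (x - a • T x)), sq_nonneg (‖x - y‖ - a * ‖u - T x‖)]
  nlinarith [mul_le_mul_of_nonneg_left hres' hρ]

end ForwardBackwardForward

theorem le_sq_of_rpow_half_le {c b : ℝ} (h : c ^ ((1 : ℝ) / 2) ≤ b) : c ≤ b ^ 2 :=
  (Real.sqrt_le_iff.mp (by rwa [Real.sqrt_eq_rpow])).2

section ConditionalExpectation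

variable {Ω : Type*} {m₁ m₂ mΩ : MeasurableSpace Ω} {μ : Measure Ω}

theorem integrable_sq_of_abs_le {f g h : Ω → ℝ} {b c : ℝ} (hf : AEStronglyMeasurable f μ)
    (hg : Integrable (fun ω => g ω ^ 2) μ) (hh : Integrable (fun ω => h ω ^ 2) μ)
    (hle : ∀ ω, |f ω| ≤ b * g ω + c * h ω) : Integrable (fun ω => f ω ^ 2) μ :=
  ((hg.const_mul (2 * b ^ 2)).add (hh.const_mul (2 * c ^ 2))).mono' (hf.pow 2)
    (ae_of_all _ fun ω => by
      rw [Real.norm_eq_abs, abs_pow, Pi.add_apply]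
      nlinarith [mul_self_le_mul_self (abs_nonneg _) (hle ω), sq_nonneg (b * g ω - c * h ω)])

theorem integrable_inner_of_integrable_sq_norm {H : Type*} [NormedAddCommGroup H]
    [InnerProductSpace ℝ H] {f g : Ω → H} (hf : AEStronglyMeasurable f μ)
    (hg : AEStronglyMeasurable g μ) (hf2 : Integrable (fun ω => ‖f ω‖ ^ 2) μ)
    (hg2 : Integrable (fun ω => ‖g ω‖ ^ 2) μ) : Integrable (fun ω => ⟪f ω, g ω⟫) μ :=
  memLp_one_iff_integrable.1 <| (innerSL ℝ).memLp_of_bilin 1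
    ((memLp_two_iff_integrable_sq_norm hf).2 hf2) ((memLp_two_iff_integrable_sq_norm hg).2 hg2)

theorem condExp_add_le {f g bf bg : Ω → ℝ} (hf : Integrable f μ) (hg : Integrable g μ)
    (hbf : μ[f|m₁] ≤ᵐ[μ] bf) (hbg : μ[g|m₁] ≤ᵐ[μ] bg) :
    μ[fun ω => f ω + g ω|m₁] ≤ᵐ[μ] fun ω => bf ω + bg ω := by
  filter_upwards [condExp_add hf hg m₁, hbf, hbg] with ω h hf hg
  exact h.trans_le (add_le_add hf hg)

theorem condExp_const_mul_le {f b : Ω → ℝ} {c : ℝ} (hc : 0 ≤ c) (hb : μ[f|m₁] ≤ᵐ[μ] b) :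
    μ[fun ω => c * f ω|m₁] ≤ᵐ[μ] fun ω => c * b ω := by
  filter_upwards [condExp_smul c f m₁, hb] with ω h hb
  exact h.trans_le (mul_le_mul_of_nonneg_left hb hc)

theorem condExp_inner_eq_zero_of_condExp_eq_zero {H : Type*} [NormedAddCommGroup H]
    [InnerProductSpace ℝ H] [CompleteSpace H] (hm₁₂ : m₁ ≤ m₂) (hm₂ : m₂ ≤ mΩ)
    [SigmaFinite (μ.trim hm₂)] {Z ξ : Ω → H} (hξ : StronglyMeasurable[m₂] ξ) (hZ : Integrable Z μ)
    (hZξ : Integrable (fun ω => ⟪Z ω, ξ ω⟫) μ) (hZ0 : μ[Z|m₂] =ᵐ[μ] 0) :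
    μ[fun ω => ⟪Z ω, ξ ω⟫|m₁] =ᵐ[μ] 0 := by
  have hpull : μ[fun ω => ⟪Z ω, ξ ω⟫|m₂] =ᵐ[μ] 0 := by
    filter_upwards [condExp_bilin_of_stronglyMeasurable_right (innerSL ℝ) hξ hZξ hZ, hZ0]
      with ω h h0
    exact h.trans (by simp [h0])
  calc μ[fun ω => ⟪Z ω, ξ ω⟫|m₁] =ᵐ[μ] μ[μ[fun ω => ⟪Z ω, ξ ω⟫|m₂]|m₁] :=
        (condExp_condExp_of_le hm₁₂ hm₂).symm
    _ =ᵐ[μ] μ[0|m₁] := condExp_congr_ae hpull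
    _ = 0 := condExp_zero

theorem condExp_le_of_condExp_le_sq [IsFiniteMeasure μ] (hm₁₂ : m₁ ≤ m₂) (hm₂ : m₂ ≤ mΩ)
    {f s w : Ω → ℝ} {b c G : ℝ} (hs : StronglyMeasurable[m₁] s)
    (hs2 : Integrable (fun ω => s ω ^ 2) μ) (hw2 : Integrable (fun ω => w ω ^ 2) μ)
    (hf : μ[f|m₂] ≤ᵐ[μ] fun ω => (b * s ω + c * w ω) ^ 2)
    (hw : μ[fun ω => w ω ^ 2|m₁] ≤ᵐ[μ] fun ω => (G * s ω) ^ 2) :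
    μ[f|m₁] ≤ᵐ[μ] fun ω => 2 * (b ^ 2 + c ^ 2 * G ^ 2) * s ω ^ 2 := by
  have hmaj : μ[f|m₂] ≤ᵐ[μ] fun ω => 2 * b ^ 2 * s ω ^ 2 + 2 * c ^ 2 * w ω ^ 2 :=
    hf.trans (ae_of_all _ fun ω => by nlinarith [sq_nonneg (b * s ω - c * w ω)])
  have htower : μ[f|m₁] ≤ᵐ[μ] μ[fun ω => 2 * b ^ 2 * s ω ^ 2 + 2 * c ^ 2 * w ω ^ 2|m₁] :=
    (condExp_condExp_of_le hm₁₂ hm₂).symm.le.trans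
      (condExp_mono integrable_condExp ((hs2.const_mul _).add (hw2.const_mul _)) hmaj)
  have hs_fixed : μ[fun ω => 2 * b ^ 2 * s ω ^ 2|m₁] ≤ᵐ[μ] fun ω => 2 * b ^ 2 * s ω ^ 2 :=
    (Filter.EventuallyEq.of_eq (condExp_of_stronglyMeasurable (hm₁₂.trans hm₂)
      ((hs.pow 2).const_mul _) (hs2.const_mul _))).le
  filter_upwards [htower.trans (condExp_add_le (hs2.const_mul _) (hw2.const_mul _) hs_fixed
    (condExp_const_mul_le (by positivity) hw))] with ω h
  nlinarith

end ConditionalExpectation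

theorem sfbf_noise_le {a L σ₀ σs G ρ d : ℝ} (ha : 0 ≤ a) (hL : 0 ≤ L) (hσ₀ : 0 ≤ σ₀)
    (hG : 0 ≤ G) (hρ : 0 ≤ 4 + ρ) :
    (4 + ρ) * a ^ 2 * (G * (σs + σ₀ * d)) ^ 2
      + 4 * a ^ 2 * (2 * ((G * (1 + a * L)) ^ 2 + (G * a * σ₀) ^ 2 * G ^ 2) * (σs + σ₀ * d) ^ 2)
      ≤ a ^ 2 * G ^ 2 * (2 * (4 + ρ) + 16 * (1 + a * L + a * σ₀ * G) ^ 2)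
        * (σ₀ ^ 2 * d ^ 2 + σs ^ 2) := by
  have hS : (σs + σ₀ * d) ^ 2 ≤ 2 * (σ₀ ^ 2 * d ^ 2 + σs ^ 2) := by
    nlinarith [sq_nonneg (σs - σ₀ * d)]
  have hK : (1 + a * L) ^ 2 + (a * σ₀ * G) ^ 2 ≤ (1 + a * L + a * σ₀ * G) ^ 2 := by
    nlinarith [mul_nonneg (mul_nonneg ha hL) (mul_nonneg (mul_nonneg ha hσ₀) hG),
      mul_nonneg (mul_nonneg ha hσ₀) hG]
  have h₁ := mul_le_mul_of_nonneg_left hK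
    (by positivity : 0 ≤ 8 * a ^ 2 * G ^ 2 * (σs + σ₀ * d) ^ 2)
  have h₂ := mul_le_mul_of_nonneg_left hS
    (by positivity : 0 ≤ a ^ 2 * G ^ 2 * (4 + ρ + 8 * (1 + a * L + a * σ₀ * G) ^ 2))
  linear_combination h₁ + h₂

section SFBFStep

variable {Ω H : Type*} [NormedAddCommGroup H] [InnerProductSpace ℝ H] {m₁ m₂ mΩ : MeasurableSpace Ω}
  {μ : Measure Ω} {K : Set H} {proj T : H → H} {L a : ℝ} {xs : H} {X A Y B X' : Ω → H}

theorem integrable_sq_dist_proj_step (hP : IsMetricProjection K proj)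
    (hT : ∀ x y, ‖T x - T y‖ ≤ L * ‖x - y‖) (hxs : xs ∈ K) (hsol : ∀ y ∈ K, 0 ≤ ⟪T xs, y - xs⟫)
    (ha : 0 ≤ a) (hY : AEStronglyMeasurable Y μ) (hYdef : ∀ ω, Y ω = proj (X ω - a • A ω))
    (hXint : Integrable (fun ω => ‖X ω - xs‖ ^ 2) μ)
    (hWint : Integrable (fun ω => ‖A ω - T (X ω)‖ ^ 2) μ) :
    Integrable (fun ω => ‖Y ω - xs‖ ^ 2) μ :=
  integrable_sq_of_abs_le (hY.sub aestronglyMeasurable_const).norm hXint hWint fun ω =>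
    (abs_norm _).trans_le (hYdef ω ▸ norm_proj_step_sub_le hP hT hxs hsol ha)

theorem integrable_sq_residual_of_proj_step (hP : IsMetricProjection K proj)
    (hT : ∀ x y, ‖T x - T y‖ ≤ L * ‖x - y‖) (ha : 0 ≤ a) (hX : StronglyMeasurable X)
    (hY : StronglyMeasurable Y) (hYdef : ∀ ω, Y ω = proj (X ω - a • A ω))
    (hXint : Integrable (fun ω => ‖X ω - xs‖ ^ 2) μ)
    (hYint : Integrable (fun ω => ‖Y ω - xs‖ ^ 2) μ)
    (hWint : Integrable (fun ω => ‖A ω - T (X ω)‖ ^ 2) μ) :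
    Integrable (fun ω => ‖X ω - proj (X ω - a • T (X ω))‖ ^ 2) μ := by
  have hTc := continuous_of_norm_sub_le_mul hT
  have hPc := hP.continuous
  have hXY : Integrable (fun ω => ‖X ω - Y ω‖ ^ 2) μ :=
    integrable_sq_of_abs_le (hX.sub hY).norm.aestronglyMeasurable hXint hYint (b := 1) (c := 1)
      fun ω => by
        rw [abs_norm, one_mul, one_mul, ← norm_sub_rev xs (Y ω)]
        exact norm_sub_le_norm_sub_add_norm_sub _ _ _
  refine integrable_sq_of_abs_le ((by fun_prop : Continuous fun x =>
    ‖x - proj (x - a • T x)‖).comp_stronglyMeasurable hX).aestronglyMeasurable hXY hWint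
    (b := 1) (c := a) fun ω => ?_
  rw [abs_norm, one_mul, hYdef]
  exact norm_sub_proj_le_of_inexact hP ha

theorem condExp_sq_dist_fbf_step_le [IsFiniteMeasure μ] (hm₁ : m₁ ≤ mΩ)
    (hP : IsMetricProjection K proj) (hT : ∀ x y, ‖T x - T y‖ ≤ L * ‖x - y‖) (hxs : xs ∈ K)
    (hmin : ∀ y ∈ K, 0 ≤ ⟪T y, y - xs⟫) (ha : 0 ≤ a) (hρ : 0 ≤ 1 - 2 * L ^ 2 * a ^ 2)
    (hX : StronglyMeasurable[m₁] X) (hYdef : ∀ ω, Y ω = proj (X ω - a • A ω))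
    (hX'def : ∀ ω, X' ω = Y ω + a • (A ω - B ω))
    (hXint : Integrable (fun ω => ‖X ω - xs‖ ^ 2) μ)
    (hX'int : Integrable (fun ω => ‖X' ω - xs‖ ^ 2) μ)
    (hrint : Integrable (fun ω => ‖X ω - proj (X ω - a • T (X ω))‖ ^ 2) μ)
    (hWint : Integrable (fun ω => ‖A ω - T (X ω)‖ ^ 2) μ)
    (hZint : Integrable (fun ω => ‖B ω - T (Y ω)‖ ^ 2) μ)
    (hIint : Integrable (fun ω => ⟪B ω - T (Y ω), xs - Y ω⟫) μ) {bW bZ : Ω → ℝ}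
    (hI : μ[fun ω => ⟪B ω - T (Y ω), xs - Y ω⟫|m₁] =ᵐ[μ] 0)
    (hW : μ[fun ω => ‖A ω - T (X ω)‖ ^ 2|m₁] ≤ᵐ[μ] bW)
    (hZ : μ[fun ω => ‖B ω - T (Y ω)‖ ^ 2|m₁] ≤ᵐ[μ] bZ) :
    ∀ᵐ ω ∂μ, μ[fun ω => ‖X' ω - xs‖ ^ 2|m₁] ω ≤ ‖X ω - xs‖ ^ 2
      - ((1 - 2 * L ^ 2 * a ^ 2) / 2) * ‖X ω - proj (X ω - a • T (X ω))‖ ^ 2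
      + (4 + (1 - 2 * L ^ 2 * a ^ 2)) * a ^ 2 * bW ω + 4 * a ^ 2 * bZ ω := by
  set ρ := 1 - 2 * L ^ 2 * a ^ 2
  set f₀ : Ω → ℝ := fun ω => ‖X ω - xs‖ ^ 2 - ρ / 2 * ‖X ω - proj (X ω - a • T (X ω))‖ ^ 2
  have hTc := continuous_of_norm_sub_le_mul hT
  have hPc := hP.continuous
  have hf₀int : Integrable f₀ μ := hXint.sub (hrint.const_mul _)
  have hf₀ : μ[f₀|m₁] ≤ᵐ[μ] f₀ :=
    (Filter.EventuallyEq.of_eq (condExp_of_stronglyMeasurable hm₁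
      ((by fun_prop : Continuous fun x => ‖x - xs‖ ^ 2 - ρ / 2 * ‖x - proj (x - a • T x)‖ ^ 2)
        |>.comp_stronglyMeasurable hX) hf₀int)).le
  have hnoise := (hIint.const_mul (2 * a)).add ((hWint.const_mul ((4 + ρ) * a ^ 2)).add
    (hZint.const_mul (4 * a ^ 2)))
  have hpt : ∀ ω, ‖X' ω - xs‖ ^ 2 ≤ f₀ ω + (2 * a * ⟪B ω - T (Y ω), xs - Y ω⟫
      + ((4 + ρ) * a ^ 2 * ‖A ω - T (X ω)‖ ^ 2 + 4 * a ^ 2 * ‖B ω - T (Y ω)‖ ^ 2)) := fun ω => by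
    have := fbf_step_sq_dist_le_residual (v := B ω) hP hT hxs hmin ha hρ (hYdef ω)
    rw [← hX'def] at this
    simp only [f₀, ρ]
    linarith
  have hbound := (condExp_mono hX'int (hf₀int.add hnoise) (ae_of_all _ hpt)).trans
    (condExp_add_le hf₀int hnoise hf₀
      (condExp_add_le (hIint.const_mul _) ((hWint.const_mul _).add (hZint.const_mul _))
        (condExp_const_mul_le (by positivity) hI.le)
        (condExp_add_le (hWint.const_mul _) (hZint.const_mul _)
          (condExp_const_mul_le (by positivity) hW) (condExp_const_mul_le (by positivity) hZ))))
  filter_upwards [hbound] with ω h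
  simp only [Pi.zero_apply, mul_zero, zero_add, f₀] at h
  linarith

theorem condExp_sq_dist_sfbf_step_le [CompleteSpace H] [IsFiniteMeasure μ] (hm₁₂ : m₁ ≤ m₂)
    (hm₂ : m₂ ≤ mΩ) (hP : IsMetricProjection K proj) (hL : 0 ≤ L)
    (hT : ∀ x y, ‖T x - T y‖ ≤ L * ‖x - y‖) (hxs : xs ∈ K) (hsol : ∀ y ∈ K, 0 ≤ ⟪T xs, y - xs⟫)
    (hmin : ∀ y ∈ K, 0 ≤ ⟪T y, y - xs⟫) {σ₀ σs G : ℝ} (ha : 0 ≤ a)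
    (hρ : 0 ≤ 1 - 2 * L ^ 2 * a ^ 2) (hσ₀ : 0 ≤ σ₀) (hσs : 0 ≤ σs) (hG : 0 ≤ G)
    (hX : StronglyMeasurable[m₁] X) (hY : StronglyMeasurable[m₂] Y)
    (hYdef : ∀ ω, Y ω = proj (X ω - a • A ω)) (hX'def : ∀ ω, X' ω = Y ω + a • (A ω - B ω))
    (hXint : Integrable (fun ω => ‖X ω - xs‖ ^ 2) μ)
    (hX'int : Integrable (fun ω => ‖X' ω - xs‖ ^ 2) μ)
    (hWint : Integrable (fun ω => ‖A ω - T (X ω)‖ ^ 2) μ)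
    (hZint : Integrable (fun ω => ‖B ω - T (Y ω)‖ ^ 2) μ)
    (hZ : Integrable (fun ω => B ω - T (Y ω)) μ) (hZ0 : μ[fun ω => B ω - T (Y ω)|m₂] =ᵐ[μ] 0)
    (hWbd : ∀ᵐ ω ∂μ, μ[fun ω => ‖A ω - T (X ω)‖ ^ 2|m₁] ω ^ ((1 : ℝ) / 2)
      ≤ G * (σs + σ₀ * ‖X ω - xs‖))
    (hZbd : ∀ᵐ ω ∂μ, μ[fun ω => ‖B ω - T (Y ω)‖ ^ 2|m₂] ω ^ ((1 : ℝ) / 2)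
      ≤ G * (σs + σ₀ * ‖Y ω - xs‖)) :
    ∀ᵐ ω ∂μ, μ[fun ω => ‖X' ω - xs‖ ^ 2|m₁] ω ≤ ‖X ω - xs‖ ^ 2
      - ((1 - 2 * L ^ 2 * a ^ 2) / 2) * ‖X ω - proj (X ω - a • T (X ω))‖ ^ 2
      + a ^ 2 * G ^ 2 * (2 * (4 + (1 - 2 * L ^ 2 * a ^ 2)) + 16 * (1 + a * L + a * σ₀ * G) ^ 2)
        * (σ₀ ^ 2 * ‖X ω - xs‖ ^ 2 + σs ^ 2) := by
  set S : Ω → ℝ := fun ω => σs + σ₀ * ‖X ω - xs‖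
  have hXm : StronglyMeasurable X := hX.mono (hm₁₂.trans hm₂)
  have hYm : StronglyMeasurable Y := hY.mono hm₂
  have hYint := integrable_sq_dist_proj_step hP hT hxs hsol ha hYm.aestronglyMeasurable hYdef
    hXint hWint
  have hSm : StronglyMeasurable[m₁] S :=
    (by fun_prop : Continuous fun x => σs + σ₀ * ‖x - xs‖).comp_stronglyMeasurable hX
  have hSint : Integrable (fun ω => S ω ^ 2) μ :=
    integrable_sq_of_abs_le (g := fun _ => 1) (hSm.mono (hm₁₂.trans hm₂)).aestronglyMeasurable
      (integrable_const _) hXint fun ω => by rw [mul_one, abs_of_nonneg (by positivity)]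
  have hW : μ[fun ω => ‖A ω - T (X ω)‖ ^ 2|m₁] ≤ᵐ[μ] fun ω => (G * S ω) ^ 2 :=
    hWbd.mono fun ω h => le_sq_of_rpow_half_le h
  have hYle : ∀ ω, ‖Y ω - xs‖ ≤ (1 + a * L) * ‖X ω - xs‖ + a * ‖A ω - T (X ω)‖ := fun ω =>
    hYdef ω ▸ norm_proj_step_sub_le hP hT hxs hsol ha
  have hZ₂ : μ[fun ω => ‖B ω - T (Y ω)‖ ^ 2|m₂] ≤ᵐ[μ]
      fun ω => (G * (1 + a * L) * S ω + G * a * σ₀ * ‖A ω - T (X ω)‖) ^ 2 :=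
    hZbd.mono fun ω h => (le_sq_of_rpow_half_le h).trans <| pow_le_pow_left₀ (by positivity)
      (by nlinarith [mul_le_mul_of_nonneg_left (hYle ω) (mul_nonneg hG hσ₀),
        mul_nonneg (mul_nonneg hG (mul_nonneg ha hL)) hσs]) 2
  have hIint : Integrable (fun ω => ⟪B ω - T (Y ω), xs - Y ω⟫) μ :=
    integrable_inner_of_integrable_sq_norm hZ.aestronglyMeasurable
    (stronglyMeasurable_const.sub hYm).aestronglyMeasurable hZint
    (by simpa only [norm_sub_rev xs] using hYint)
  filter_upwards [condExp_sq_dist_fbf_step_le (hm₁₂.trans hm₂) hP hT hxs hmin ha hρ hX hYdef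
    hX'def hXint hX'int (integrable_sq_residual_of_proj_step hP hT ha hXm hYm hYdef hXint hYint
    hWint) hWint hZint hIint (condExp_inner_eq_zero_of_condExp_eq_zero hm₁₂ hm₂
    (stronglyMeasurable_const.sub hY) hZ hIint hZ0) hW
    (condExp_le_of_condExp_le_sq hm₁₂ hm₂ hSm hSint hWint hZ₂ hW)] with ω h
  have := sfbf_noise_le ha hL hσ₀ hG (by linarith : 0 ≤ 4 + (1 - 2 * L ^ 2 * a ^ 2))
    (σs := σs) (d := ‖X ω - xs‖)
  simp only [S] at h
  linarith

end SFBFStep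

theorem stmt_10_general {d : ℕ} {Ω : Type*} [mΩ : MeasurableSpace Ω]
    (μ : Measure Ω) [IsProbabilityMeasure μ]
    (𝒳 : Set (EuclideanSpace ℝ (Fin d)))
    (proj : EuclideanSpace ℝ (Fin d) → EuclideanSpace ℝ (Fin d))
    (hproj_mem : ∀ x, proj x ∈ 𝒳)
    (hproj_char : ∀ x, ∀ y ∈ 𝒳, ⟪x - proj x, y - proj x⟫ ≤ 0)
    (T : EuclideanSpace ℝ (Fin d) → EuclideanSpace ℝ (Fin d))
    (L : ℝ) (hL : 0 < L)
    (hLip : ∀ x y, ‖T x - T y‖ ≤ L * ‖x - y‖)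
    (hpm : ∀ x y, 0 ≤ ⟪T x, y - x⟫ → 0 ≤ ⟪T y, y - x⟫)
    (xs : EuclideanSpace ℝ (Fin d)) (hxs_mem : xs ∈ 𝒳)
    (hxs_sol : ∀ y ∈ 𝒳, 0 ≤ ⟪T xs, y - xs⟫)
    -- variance assumption at the solution `x*`
    (σ₀ σs : ℝ) (hσ₀ : 0 ≤ σ₀) (hσs : 0 ≤ σs)
    -- step sizes and batch sizes
    (α : ℕ → ℝ) (hα : ∀ n, 0 < α n) (hαL : ∀ n, Real.sqrt 2 * L * α n < 1)
    (mb : ℕ → ℕ)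
    -- filtrations and adapted processes
    (𝓕 𝓕hat : ℕ → MeasurableSpace Ω)
    (h𝓕le : ∀ n, 𝓕 n ≤ 𝓕hat n)
    (h𝓕Ω : ∀ n, 𝓕hat n ≤ mΩ)
    (X Y A B : ℕ → Ω → EuclideanSpace ℝ (Fin d))
    (hXad : ∀ n, StronglyMeasurable[𝓕 n] (X n))
    (hYad : ∀ n, StronglyMeasurable[𝓕hat n] (Y n))
    -- the SFBF recursion
    (hY : ∀ n ω, Y n ω = proj (X n ω - α n • A n ω))
    (hX : ∀ n ω, X (n + 1) ω = Y n ω + α n • (A n ω - B n ω))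
    -- integrability
    (hXint : ∀ n, Integrable (fun ω => ‖X n ω - xs‖ ^ 2) μ)
    (hWint : ∀ n, Integrable (fun ω => ‖A n ω - T (X n ω)‖ ^ 2) μ)
    (hZint : ∀ n, Integrable (fun ω => ‖B n ω - T (Y n ω)‖ ^ 2) μ)
    (hBint : ∀ n, Integrable (B n) μ)
    (hTYint : ∀ n, Integrable (fun ω => T (Y n ω)) μ)
    -- the oracle errors have zero conditional mean
    (hZ0 : ∀ n, condExp (𝓕hat n) μ (fun ω => B n ω - T (Y n ω)) =ᵐ[μ] 0)
    -- the conditional second-moment oracle bounds, with constant `C₂`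
    (C₂ : ℝ) (hC₂ : 0 < C₂)
    (hWbd : ∀ n, ∀ᵐ ω ∂μ,
      (condExp (𝓕 n) μ (fun ω' => ‖A n ω' - T (X n ω')‖ ^ 2) ω) ^ ((1 : ℝ) / 2)
        ≤ (C₂ / Real.sqrt (mb (n + 1))) * (σs + σ₀ * ‖X n ω - xs‖))
    (hZbd : ∀ n, ∀ᵐ ω ∂μ,
      (condExp (𝓕hat n) μ (fun ω' => ‖B n ω' - T (Y n ω')‖ ^ 2) ω) ^ ((1 : ℝ) / 2)
        ≤ (C₂ / Real.sqrt (mb (n + 1))) * (σs + σ₀ * ‖Y n ω - xs‖)) :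
    ∀ n, ∀ᵐ ω ∂μ,
      condExp (𝓕 n) μ (fun ω' => ‖X (n + 1) ω' - xs‖ ^ 2) ω
        ≤ ‖X n ω - xs‖ ^ 2
          - ((1 - 2 * L ^ 2 * (α n) ^ 2) / 2) *
              ‖X n ω - proj (X n ω - α n • T (X n ω))‖ ^ 2
          + (((α n) ^ 2 * C₂ ^ 2 *
                (2 * (4 + (1 - 2 * L ^ 2 * (α n) ^ 2)) +
                  16 * (1 + α n * L + α n * σ₀ * (C₂ / Real.sqrt (mb (n + 1)))) ^ 2))
              / (mb (n + 1))) *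
            (σ₀ ^ 2 * ‖X n ω - xs‖ ^ 2 + σs ^ 2) := by
  intro n
  have hρ : 0 ≤ 1 - 2 * L ^ 2 * α n ^ 2 := by
    nlinarith [hαL n, Real.sq_sqrt (zero_le_two (α := ℝ)),
      mul_nonneg (mul_nonneg (Real.sqrt_nonneg 2) hL.le) (hα n).le]
  have hG : (C₂ / Real.sqrt (mb (n + 1))) ^ 2 = C₂ ^ 2 / mb (n + 1) := by
    rw [div_pow, Real.sq_sqrt (Nat.cast_nonneg _)]
  filter_upwards [condExp_sq_dist_sfbf_step_le (h𝓕le n) (h𝓕Ω n) ⟨hproj_mem, hproj_char⟩ hL.le hLip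
    hxs_mem hxs_sol (fun y hy => hpm xs y (hxs_sol y hy)) (hα n).le hρ hσ₀ hσs
    (div_nonneg hC₂.le (Real.sqrt_nonneg _)) (hXad n) (hYad n) (hY n) (hX n) (hXint n)
    (hXint (n + 1)) (hWint n) (hZint n) ((hBint n).sub (hTYint n)) (hZ0 n) (hWbd n) (hZbd n)]
    with ω h
  convert h using 3
  rw [hG]
  ring

/-- The stochastic quasi-Fejér inequality for the SFBF iterates (Proposition 4.3):
`E[‖X_{n+1} − x*‖² | F_n] ≤ ‖X_n − x*‖² − (ρ_n/2)r_{α_n}(X_n)²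
  + (κ_n/m_{n+1})(σ₀²‖X_n − x*‖² + σ(x*)²)` a.s. -/
theorem stmt_10 {d : ℕ} {Ω Ξ : Type*} [mΩ : MeasurableSpace Ω] [mΞ : MeasurableSpace Ξ]
    (μ : Measure Ω) [IsProbabilityMeasure μ]
    (P : Measure Ξ) [IsProbabilityMeasure P]
    (𝒳 : Set (EuclideanSpace ℝ (Fin d)))
    (h𝒳ne : 𝒳.Nonempty) (h𝒳cl : IsClosed 𝒳) (h𝒳cv : Convex ℝ 𝒳)
    (proj : EuclideanSpace ℝ (Fin d) → EuclideanSpace ℝ (Fin d))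
    (hproj_mem : ∀ x, proj x ∈ 𝒳)
    (hproj_char : ∀ x, ∀ y ∈ 𝒳, ⟪x - proj x, y - proj x⟫ ≤ 0)
    (F : EuclideanSpace ℝ (Fin d) → Ξ → EuclideanSpace ℝ (Fin d))
    (hFmeas : ∀ x, Measurable (F x))
    (T : EuclideanSpace ℝ (Fin d) → EuclideanSpace ℝ (Fin d))
    (hT : ∀ x, T x = ∫ z, F x z ∂P)
    (hTint : ∀ x, Integrable (fun z => F x z) P)
    (L : ℝ) (hL : 0 < L)
    (hLip : ∀ x y, ‖T x - T y‖ ≤ L * ‖x - y‖)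
    (hpm : ∀ x y, 0 ≤ ⟪T x, y - x⟫ → 0 ≤ ⟪T y, y - x⟫)
    (xs : EuclideanSpace ℝ (Fin d)) (hxs_mem : xs ∈ 𝒳)
    (hxs_sol : ∀ y ∈ 𝒳, 0 ≤ ⟪T xs, y - xs⟫)
    -- variance assumption at the solution `x*`
    (p σ₀ σs : ℝ) (hp : 2 ≤ p) (hσ₀ : 0 ≤ σ₀) (hσs : 0 ≤ σs)
    (hvar : ∀ x, (∫ z, ‖F x z - T x‖ ^ p ∂P) ^ (1 / p) ≤ σs + σ₀ * ‖x - xs‖)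
    -- step sizes and batch sizes
    (α : ℕ → ℝ) (hα : ∀ n, 0 < α n) (hαL : ∀ n, Real.sqrt 2 * L * α n < 1)
    (mb : ℕ → ℕ) (hmb : ∀ n, 1 ≤ mb n)
    -- filtrations and adapted processes
    (𝓕 𝓕hat : ℕ → MeasurableSpace Ω)
    (h𝓕le : ∀ n, 𝓕 n ≤ 𝓕hat n) (h𝓕hatle : ∀ n, 𝓕hat n ≤ 𝓕 (n + 1))
    (h𝓕Ω : ∀ n, 𝓕hat n ≤ mΩ)
    (X Y A B : ℕ → Ω → EuclideanSpace ℝ (Fin d))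
    (hXad : ∀ n, StronglyMeasurable[𝓕 n] (X n))
    (hAad : ∀ n, StronglyMeasurable[𝓕hat n] (A n))
    (hYad : ∀ n, StronglyMeasurable[𝓕hat n] (Y n))
    (hBad : ∀ n, StronglyMeasurable[𝓕 (n + 1)] (B n))
    -- the SFBF recursion
    (hY : ∀ n ω, Y n ω = proj (X n ω - α n • A n ω))
    (hX : ∀ n ω, X (n + 1) ω = Y n ω + α n • (A n ω - B n ω))
    -- integrability
    (hXint : ∀ n, Integrable (fun ω => ‖X n ω - xs‖ ^ 2) μ)
    (hWint : ∀ n, Integrable (fun ω => ‖A n ω - T (X n ω)‖ ^ 2) μ)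
    (hZint : ∀ n, Integrable (fun ω => ‖B n ω - T (Y n ω)‖ ^ 2) μ)
    (hAint : ∀ n, Integrable (A n) μ) (hBint : ∀ n, Integrable (B n) μ)
    (hTXint : ∀ n, Integrable (fun ω => T (X n ω)) μ)
    (hTYint : ∀ n, Integrable (fun ω => T (Y n ω)) μ)
    -- the oracle errors have zero conditional mean
    (hW0 : ∀ n, condExp (𝓕 n) μ (fun ω => A n ω - T (X n ω)) =ᵐ[μ] 0)
    (hZ0 : ∀ n, condExp (𝓕hat n) μ (fun ω => B n ω - T (Y n ω)) =ᵐ[μ] 0)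
    -- the conditional second-moment oracle bounds, with constant `C₂`
    (C₂ : ℝ) (hC₂ : 0 < C₂)
    (hWbd : ∀ n, ∀ᵐ ω ∂μ,
      (condExp (𝓕 n) μ (fun ω' => ‖A n ω' - T (X n ω')‖ ^ 2) ω) ^ ((1 : ℝ) / 2)
        ≤ (C₂ / Real.sqrt (mb (n + 1))) * (σs + σ₀ * ‖X n ω - xs‖))
    (hZbd : ∀ n, ∀ᵐ ω ∂μ,
      (condExp (𝓕hat n) μ (fun ω' => ‖B n ω' - T (Y n ω')‖ ^ 2) ω) ^ ((1 : ℝ) / 2)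
        ≤ (C₂ / Real.sqrt (mb (n + 1))) * (σs + σ₀ * ‖Y n ω - xs‖)) :
    ∀ n, ∀ᵐ ω ∂μ,
      condExp (𝓕 n) μ (fun ω' => ‖X (n + 1) ω' - xs‖ ^ 2) ω
        ≤ ‖X n ω - xs‖ ^ 2
          - ((1 - 2 * L ^ 2 * (α n) ^ 2) / 2) *
              ‖X n ω - proj (X n ω - α n • T (X n ω))‖ ^ 2
          + (((α n) ^ 2 * C₂ ^ 2 *
                (2 * (4 + (1 - 2 * L ^ 2 * (α n) ^ 2)) +
                  16 * (1 + α n * L + α n * σ₀ * (C₂ / Real.sqrt (mb (n + 1)))) ^ 2))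
              / (mb (n + 1))) *
            (σ₀ ^ 2 * ‖X n ω - xs‖ ^ 2 + σs ^ 2) :=
  stmt_10_general (mΩ := mΩ) μ 𝒳 proj hproj_mem hproj_char T L hL hLip hpm xs hxs_mem hxs_sol σ₀ σs
    hσ₀ hσs α hα hαL mb 𝓕 𝓕hat h𝓕le h𝓕Ω X Y A B hXad hYad hY hX hXint hWint hZint hBint hTYint hZ0
    C₂ hC₂ hWbd hZbd
end

section
/- In the SFBF setup, fix x* ∈ 𝒳_* and set σ̂(x*) = max{σ(x*), σ₀}, a(x*) = σ̂(x*)² ᾱ² C₂² c₁, where ᾱ = sup_n α_n and c₁ > 1 is a constant such that κ_n ≤ ᾱ² C₂² c₁ (1 + ᾱ² σ₀² C₂² / m_{n+1}) for all n (κ_n as in the stochastic quasi-Fejér inequality). Choose n₀ ∈ ℕ and γ > 0 such that Σ_{n ≥ n₀} 1/m_{n+1} ≤ γ and β(x*) := γ·a(x*) + γ²·a(x*)² ∈ (0,1). Then sup_{n ≥ n₀+1} E[‖X_n − x*‖²] ≤ (E[‖X_{n₀} − x*‖²] + 1)/(1 − β(x*)). -/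
open MeasureTheory Finset
open scoped RealInnerProductSpace

/-!
Taking expectations in the quasi-Fejér inequality (the tower property, dropping the nonnegative
residual term since `2 L² α_n² ≤ 1`) gives `e_{n+1} + 1 ≤ (1 + c_n)(e_n + 1)` for
`e_n = E‖X_n − x*‖²` and `c_n = a q_n (1 + a q_n)`, `q_n = 1 / m_{n+1}`. Iterating and using
`1 + c ≤ exp c` bounds `e_n + 1` by `(e_{n₀} + 1) exp (∑_{n₀ ≤ k < n} c_k)`; the sum is at most
`γ a + γ² a² = β` because `∑ q_k² ≤ (∑ q_k)² ≤ γ²`, and `exp β ≤ 1 / (1 − β)` for `β ∈ [0, 1)`.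
-/

lemma le_mul_prod_Ico_of_succ_le_mul {R : Type*} [CommSemiring R] [PartialOrder R]
    [IsOrderedRing R] {u c : ℕ → R} (hc : ∀ n, 0 ≤ c n) (hu : ∀ n, u (n + 1) ≤ c n * u n)
    {n₀ n : ℕ} (hn : n₀ ≤ n) : u n ≤ u n₀ * ∏ k ∈ Ico n₀ n, c k := by
  induction n, hn using Nat.le_induction with
  | base => simp
  | succ n hn ih =>
    calc u (n + 1) ≤ c n * u n := hu n
      _ ≤ c n * (u n₀ * ∏ k ∈ Ico n₀ n, c k) := mul_le_mul_of_nonneg_left ih (hc n)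
      _ = u n₀ * ∏ k ∈ Ico n₀ (n + 1), c k := by rw [prod_Ico_succ_top hn]; ring

lemma sum_Ico_le_tsum_add {f : ℕ → ℝ} (hf0 : ∀ n, 0 ≤ f n) (hf : Summable f) (n₀ n : ℕ) :
    ∑ k ∈ Ico n₀ n, f k ≤ ∑' i, f (n₀ + i) := by
  rw [sum_Ico_eq_sum_range]
  exact (hf.comp_injective (add_right_injective n₀)).sum_le_tsum _ fun i _ ↦ hf0 _

lemma sum_mul_one_add_mul_le {ι : Type*} (s : Finset ι) {q : ι → ℝ} {a γ : ℝ} (ha : 0 ≤ a)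
    (hq : ∀ i, 0 ≤ q i) (hqγ : ∑ i ∈ s, q i ≤ γ) :
    ∑ i ∈ s, a * q i * (1 + a * q i) ≤ γ * a + γ ^ 2 * a ^ 2 := by
  have hsq : ∑ i ∈ s, q i ^ 2 ≤ γ ^ 2 :=
    (sum_sq_le_sq_sum_of_nonneg fun i _ ↦ hq i).trans
      (pow_le_pow_left₀ (sum_nonneg fun i _ ↦ hq i) hqγ 2)
  calc ∑ i ∈ s, a * q i * (1 + a * q i) = a * ∑ i ∈ s, q i + a ^ 2 * ∑ i ∈ s, q i ^ 2 := by
        rw [mul_sum, mul_sum, ← sum_add_distrib]; exact sum_congr rfl fun i _ ↦ by ring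
    _ ≤ a * γ + a ^ 2 * γ ^ 2 := by gcongr
    _ = γ * a + γ ^ 2 * a ^ 2 := by ring

lemma integral_le_of_ae_condExp_le {Ω : Type*} {m m₀ : MeasurableSpace Ω} {μ : Measure Ω}
    [IsFiniteMeasure μ] (hm : m ≤ m₀) {f g : Ω → ℝ} (hg : Integrable g μ)
    (hfg : ∀ᵐ ω ∂μ, μ[f | m] ω ≤ g ω) : ∫ ω, f ω ∂μ ≤ ∫ ω, g ω ∂μ :=
  integral_condExp (μ := μ) (f := f) hm ▸ integral_mono_ae integrable_condExp hg hfg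

lemma integral_le_of_ae_condExp_le_sub_add {Ω : Type*} {m m₀ : MeasurableSpace Ω}
    {μ : Measure Ω} [IsProbabilityMeasure μ] (hm : m ≤ m₀) {f g r : Ω → ℝ} {ρ k b c : ℝ}
    (hg : Integrable g μ) (hρ : 0 ≤ ρ) (hr : ∀ ω, 0 ≤ r ω)
    (hfg : ∀ᵐ ω ∂μ, μ[f | m] ω ≤ g ω - ρ * r ω + k * (b * g ω + c)) :
    ∫ ω, f ω ∂μ ≤ ∫ ω, g ω ∂μ + k * (b * ∫ ω, g ω ∂μ + c) := by
  have hnoise : Integrable (fun ω ↦ k * (b * g ω + c)) μ :=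
    ((hg.const_mul b).add (integrable_const c)).const_mul k
  refine (integral_le_of_ae_condExp_le (g := fun ω ↦ g ω + k * (b * g ω + c)) hm
    (hg.add hnoise) ?_).trans_eq ?_
  · filter_upwards [hfg] with ω hω
    linarith [mul_nonneg hρ (hr ω)]
  · rw [integral_add hg hnoise, integral_const_mul,
      integral_add (hg.const_mul b) (integrable_const c), integral_const_mul]
    simp

lemma two_mul_sq_mul_sq_le_one {L α αup : ℝ} (hL : 0 ≤ L) (hα0 : 0 ≤ α) (hα : α ≤ αup)
    (hαup : Real.sqrt 2 * L * αup < 1) : 2 * L ^ 2 * α ^ 2 ≤ 1 := by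
  have hLα : Real.sqrt 2 * L * α ≤ 1 := by
    have := mul_le_mul_of_nonneg_left hα (by positivity : 0 ≤ Real.sqrt 2 * L)
    linarith
  calc 2 * L ^ 2 * α ^ 2 = (Real.sqrt 2 * L * α) ^ 2 := by
        rw [mul_pow, mul_pow, Real.sq_sqrt zero_le_two]
    _ ≤ 1 := pow_le_one₀ (by positivity) hLα

lemma mul_mul_sq_add_sq_le {κ q e σs σ₀ s A c₁ a : ℝ} (hσs : σs ^ 2 ≤ s ^ 2)
    (hσ₀ : σ₀ ^ 2 ≤ s ^ 2) (hA : 0 ≤ A) (hc₁ : 1 ≤ c₁) (ha : a = s ^ 2 * A * c₁)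
    (hκ0 : 0 ≤ κ) (hκ : κ ≤ A * c₁ * (1 + A * σ₀ ^ 2 * q)) (hq : 0 ≤ q) (he : 0 ≤ e) :
    κ * q * (σ₀ ^ 2 * e + σs ^ 2) ≤ a * q * (1 + a * q) * (e + 1) := by
  have ha0 : 0 ≤ a := ha ▸ by positivity
  have hAσ : A * σ₀ ^ 2 ≤ a := by
    rw [ha]
    calc A * σ₀ ^ 2 ≤ A * s ^ 2 * 1 := by rw [mul_one]; gcongr
      _ ≤ s ^ 2 * A * c₁ := by rw [mul_comm A]; gcongr
  have hκs : κ * s ^ 2 ≤ a * (1 + a * q) :=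
    calc κ * s ^ 2 ≤ A * c₁ * (1 + A * σ₀ ^ 2 * q) * s ^ 2 := by gcongr
      _ = a * (1 + A * σ₀ ^ 2 * q) := by rw [ha]; ring
      _ ≤ a * (1 + a * q) := by gcongr
  calc κ * q * (σ₀ ^ 2 * e + σs ^ 2) ≤ κ * q * (s ^ 2 * (e + 1)) := by
        gcongr; nlinarith
    _ = κ * s ^ 2 * (q * (e + 1)) := by ring
    _ ≤ a * (1 + a * q) * (q * (e + 1)) := by gcongr
    _ = a * q * (1 + a * q) * (e + 1) := by ring

lemma le_div_one_sub_of_succ_le_one_add_mul {u c : ℕ → ℝ} (hu0 : ∀ n, 0 ≤ u n)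
    (hc : ∀ n, 0 ≤ c n) (hu : ∀ n, u (n + 1) ≤ (1 + c n) * u n) {n₀ n : ℕ} (hn : n₀ ≤ n)
    {β : ℝ} (hsum : ∑ k ∈ Ico n₀ n, c k ≤ β) (hβ : β < 1) : u n ≤ u n₀ / (1 - β) :=
  calc u n ≤ u n₀ * ∏ k ∈ Ico n₀ n, (1 + c k) :=
        le_mul_prod_Ico_of_succ_le_mul (fun n ↦ by linarith [hc n]) hu hn
    _ ≤ u n₀ * Real.exp (∑ k ∈ Ico n₀ n, c k) := by
      gcongr
      · exact hu0 n₀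
      · exact Real.prod_one_add_le_exp_sum _ hc
    _ ≤ u n₀ * (1 / (1 - β)) := by
      gcongr
      · exact hu0 n₀
      · exact (Real.exp_le_exp.2 hsum).trans (Real.exp_bound_div_one_sub_of_interval
          ((sum_nonneg fun k _ ↦ hc k).trans hsum) hβ)
    _ = u n₀ / (1 - β) := mul_one_div _ _

theorem stmt_14_general {d : ℕ} {Ω : Type*} [mΩ : MeasurableSpace Ω]
    (μ : Measure Ω) [IsProbabilityMeasure μ]
    (proj : EuclideanSpace ℝ (Fin d) → EuclideanSpace ℝ (Fin d))
    (T : EuclideanSpace ℝ (Fin d) → EuclideanSpace ℝ (Fin d))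
    (L : ℝ) (hL : 0 < L)
    (xs : EuclideanSpace ℝ (Fin d))
    -- step sizes and batch sizes
    (α : ℕ → ℝ) (αlow αup : ℝ) (hαlow : 0 < αlow) (hαup : Real.sqrt 2 * L * αup < 1)
    (hα : ∀ n, αlow ≤ α n ∧ α n ≤ αup)
    (mb : ℕ → ℕ)
    (hmb_sum : Summable fun n => ((mb n : ℝ))⁻¹)
    -- filtration and adapted iterates
    (𝓕 : ℕ → MeasurableSpace Ω) (h𝓕Ω : ∀ n, 𝓕 n ≤ mΩ)
    (X : ℕ → Ω → EuclideanSpace ℝ (Fin d))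
    (hXint : ∀ n, Integrable (fun ω => ‖X n ω - xs‖ ^ 2) μ)
    -- the variance parameters and the stochastic quasi-Fejér inequality
    (σs σ₀ C₂ c₁ : ℝ) (hσs : 0 ≤ σs) (hσ₀ : 0 ≤ σ₀) (hc₁ : 1 < c₁)
    (κ : ℕ → ℝ) (hκ0 : ∀ n, 0 ≤ κ n)
    (hFejer : ∀ n, ∀ᵐ ω ∂μ,
      condExp (𝓕 n) μ (fun ω' => ‖X (n + 1) ω' - xs‖ ^ 2) ω
        ≤ ‖X n ω - xs‖ ^ 2
          - ((1 - 2 * L ^ 2 * (α n) ^ 2) / 2) *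
              ‖X n ω - proj (X n ω - α n • T (X n ω))‖ ^ 2
          + (κ n / (mb (n + 1))) * (σ₀ ^ 2 * ‖X n ω - xs‖ ^ 2 + σs ^ 2))
    (hκ : ∀ n, κ n ≤ αup ^ 2 * C₂ ^ 2 * c₁ * (1 + αup ^ 2 * σ₀ ^ 2 * C₂ ^ 2 / (mb (n + 1))))
    -- the constants `a(x*)`, `γ`, `n₀` and `β(x*)`
    (a γ β : ℝ) (n₀ : ℕ)
    (ha : a = (max σs σ₀) ^ 2 * αup ^ 2 * C₂ ^ 2 * c₁)
    (hn₀ : ∑' i : ℕ, ((mb (n₀ + i + 1) : ℝ))⁻¹ ≤ γ)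
    (hβ : β = γ * a + γ ^ 2 * a ^ 2)
    (hβ01 : 0 < β ∧ β < 1) :
    ∀ n, n₀ + 1 ≤ n →
      ∫ ω, ‖X n ω - xs‖ ^ 2 ∂μ ≤ ((∫ ω, ‖X n₀ ω - xs‖ ^ 2 ∂μ) + 1) / (1 - β) := by
  intro N hN
  set e : ℕ → ℝ := fun n ↦ ∫ ω, ‖X n ω - xs‖ ^ 2 ∂μ
  set q : ℕ → ℝ := fun n ↦ ((mb (n + 1) : ℝ))⁻¹
  set c : ℕ → ℝ := fun n ↦ a * q n * (1 + a * q n)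
  have he0 (n : ℕ) : 0 ≤ e n := integral_nonneg fun ω ↦ by positivity
  have hq0 (n : ℕ) : 0 ≤ q n := by positivity
  have ha0 : 0 ≤ a := ha ▸ mul_nonneg (by positivity) (by linarith)
  have hstep (n : ℕ) : e (n + 1) + 1 ≤ (1 + c n) * (e n + 1) := by
    have hρ := two_mul_sq_mul_sq_le_one hL.le (hαlow.le.trans (hα n).1) (hα n).2 hαup
    have hmean := integral_le_of_ae_condExp_le_sub_add (h𝓕Ω n) (hXint n) (by linarith)
      (fun ω ↦ sq_nonneg _) (hFejer n)
    have hnoise := mul_mul_sq_add_sq_le (a := a) (pow_le_pow_left₀ hσs (le_max_left _ _) 2)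
      (pow_le_pow_left₀ hσ₀ (le_max_right _ _) 2) (by positivity : 0 ≤ αup ^ 2 * C₂ ^ 2)
      hc₁.le (by rw [ha]; ring) (hκ0 n) ((hκ n).trans_eq (by ring)) (hq0 n) (he0 n)
    rw [div_eq_mul_inv] at hmean
    linarith
  have hsum : ∑ k ∈ Ico n₀ N, c k ≤ β := hβ ▸ sum_mul_one_add_mul_le _ ha0 hq0
    ((sum_Ico_le_tsum_add hq0 (hmb_sum.comp_injective (add_left_injective 1)) n₀ N).trans hn₀)
  have := le_div_one_sub_of_succ_le_one_add_mul (u := fun n ↦ e n + 1)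
    (fun n ↦ by linarith [he0 n]) (fun n ↦ by positivity) hstep (by omega) hsum hβ01.2
  linarith

/-- Boundedness of the second moments of the SFBF iterates (Proposition 5.1):
`sup_{n ≥ n₀+1} E[‖X_n − x*‖²] ≤ (E[‖X_{n₀} − x*‖²] + 1)/(1 − β(x*))`. -/
theorem stmt_14 {d : ℕ} {Ω : Type*} [mΩ : MeasurableSpace Ω]
    (μ : Measure Ω) [IsProbabilityMeasure μ]
    (𝒳 : Set (EuclideanSpace ℝ (Fin d)))
    (h𝒳ne : 𝒳.Nonempty) (h𝒳cl : IsClosed 𝒳) (h𝒳cv : Convex ℝ 𝒳)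
    (proj : EuclideanSpace ℝ (Fin d) → EuclideanSpace ℝ (Fin d))
    (hproj_mem : ∀ x, proj x ∈ 𝒳)
    (hproj_char : ∀ x, ∀ y ∈ 𝒳, ⟪x - proj x, y - proj x⟫ ≤ 0)
    (T : EuclideanSpace ℝ (Fin d) → EuclideanSpace ℝ (Fin d))
    (L : ℝ) (hL : 0 < L)
    (hLip : ∀ x y, ‖T x - T y‖ ≤ L * ‖x - y‖)
    (hpm : ∀ x y, 0 ≤ ⟪T x, y - x⟫ → 0 ≤ ⟪T y, y - x⟫)
    (xs : EuclideanSpace ℝ (Fin d)) (hxs_mem : xs ∈ 𝒳)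
    (hxs_sol : ∀ y ∈ 𝒳, 0 ≤ ⟪T xs, y - xs⟫)
    -- step sizes and batch sizes
    (α : ℕ → ℝ) (αlow αup : ℝ) (hαlow : 0 < αlow) (hαup : Real.sqrt 2 * L * αup < 1)
    (hα : ∀ n, αlow ≤ α n ∧ α n ≤ αup)
    (mb : ℕ → ℕ) (hmb : ∀ n, 1 ≤ mb n)
    (hmb_sum : Summable fun n => ((mb n : ℝ))⁻¹)
    -- filtration and adapted iterates
    (𝓕 : ℕ → MeasurableSpace Ω) (h𝓕mono : ∀ n, 𝓕 n ≤ 𝓕 (n + 1)) (h𝓕Ω : ∀ n, 𝓕 n ≤ mΩ)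
    (X : ℕ → Ω → EuclideanSpace ℝ (Fin d))
    (hXad : ∀ n, StronglyMeasurable[𝓕 n] (X n))
    (hXint : ∀ n, Integrable (fun ω => ‖X n ω - xs‖ ^ 2) μ)
    (hrint : ∀ n, Integrable
      (fun ω => ‖X n ω - proj (X n ω - α n • T (X n ω))‖ ^ 2) μ)
    -- the variance parameters and the stochastic quasi-Fejér inequality
    (σs σ₀ C₂ c₁ : ℝ) (hσs : 0 ≤ σs) (hσ₀ : 0 ≤ σ₀) (hC₂ : 0 < C₂) (hc₁ : 1 < c₁)
    (κ : ℕ → ℝ) (hκ0 : ∀ n, 0 ≤ κ n)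
    (hFejer : ∀ n, ∀ᵐ ω ∂μ,
      condExp (𝓕 n) μ (fun ω' => ‖X (n + 1) ω' - xs‖ ^ 2) ω
        ≤ ‖X n ω - xs‖ ^ 2
          - ((1 - 2 * L ^ 2 * (α n) ^ 2) / 2) *
              ‖X n ω - proj (X n ω - α n • T (X n ω))‖ ^ 2
          + (κ n / (mb (n + 1))) * (σ₀ ^ 2 * ‖X n ω - xs‖ ^ 2 + σs ^ 2))
    (hκ : ∀ n, κ n ≤ αup ^ 2 * C₂ ^ 2 * c₁ * (1 + αup ^ 2 * σ₀ ^ 2 * C₂ ^ 2 / (mb (n + 1))))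
    -- the constants `a(x*)`, `γ`, `n₀` and `β(x*)`
    (a γ β : ℝ) (n₀ : ℕ)
    (ha : a = (max σs σ₀) ^ 2 * αup ^ 2 * C₂ ^ 2 * c₁)
    (hγ : 0 < γ)
    (hn₀ : ∑' i : ℕ, ((mb (n₀ + i + 1) : ℝ))⁻¹ ≤ γ)
    (hβ : β = γ * a + γ ^ 2 * a ^ 2)
    (hβ01 : 0 < β ∧ β < 1) :
    ∀ n, n₀ + 1 ≤ n →
      ∫ ω, ‖X n ω - xs‖ ^ 2 ∂μ ≤ ((∫ ω, ‖X n₀ ω - xs‖ ^ 2 ∂μ) + 1) / (1 - β) :=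
  stmt_14_general (mΩ := mΩ) μ proj T L hL xs α αlow αup hαlow hαup hα mb hmb_sum 𝓕 h𝓕Ω X hXint σs
    σ₀ C₂ c₁ hσs hσ₀ hc₁ κ hκ0 hFejer hκ a γ β n₀ ha hn₀ hβ hβ01
end

section
/- In the SFBF setup, suppose the variance is uniformly bounded over the solution set: σ̂(x*) := max{σ(x*), σ₀} ≤ σ̂ for all x* ∈ 𝒳_*. Set a = ᾱ² σ̂² C₂² c₁ (ᾱ = sup_n α_n, c₁ > 1 the constant with κ_n ≤ ᾱ² C₂² c₁(1 + ᾱ² σ̂² C₂²/m_{n+1})). Let φ ∈ (0, (√5 − 1)/2) and n₀ ≥ 1 be such that Σ_{i ≥ n₀} 1/m_{i+1} ≤ φ/a. Then sup_{n ≥ n₀+1} E[dist(X_n, 𝒳_*)²] ≤ (1 + E[dist(X_{n₀}, 𝒳_*)²])/(1 − φ − φ²). -/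
/-!
Write `D n = E[dist(X n, 𝒳_*)²]` and `q n = κ n σ̂² / m (n+1)`. Integrating the quasi-Fejér
inequality and dropping the residual term gives `1 + D (n+1) ≤ (1 + q n) (1 + D n)`, and
telescoping this yields `(1 - ∑_{n₀ ≤ i < n} q i) (1 + D n) ≤ 1 + D n₀`. The bound on `κ` gives
`q i ≤ a / m (i+1) + (a / m (i+1))²`, so the tail condition on `1 / m` bounds the partial sums
of `q` by `φ + φ² < 1`.
-/

open MeasureTheory Finset
open scoped RealInnerProductSpace

lemma add_sq_lt_one {φ : ℝ} (h0 : 0 ≤ φ) (h : φ < (Real.sqrt 5 - 1) / 2) : φ + φ ^ 2 < 1 := by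
  nlinarith [Real.sq_sqrt (show (0 : ℝ) ≤ 5 by norm_num), Real.sqrt_nonneg 5]

lemma two_mul_sq_mul_sq_lt_one {L α αup : ℝ} (hL : 0 ≤ L) (hα0 : 0 ≤ α) (hα : α ≤ αup)
    (h : Real.sqrt 2 * L * αup < 1) : 2 * L ^ 2 * α ^ 2 < 1 := by
  have h2 : Real.sqrt 2 ^ 2 = 2 := Real.sq_sqrt (by norm_num)
  have hle : Real.sqrt 2 * L * α ≤ Real.sqrt 2 * L * αup := by gcongr
  nlinarith [mul_nonneg (mul_nonneg (Real.sqrt_nonneg 2) hL) hα0]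

lemma mul_sq_div_le {κ α σ C c m : ℝ} (hc : 1 ≤ c) (hm : 0 ≤ m)
    (hκ : κ ≤ α ^ 2 * C ^ 2 * c * (1 + α ^ 2 * σ ^ 2 * C ^ 2 / m)) :
    κ * σ ^ 2 / m ≤ α ^ 2 * σ ^ 2 * C ^ 2 * c / m + (α ^ 2 * σ ^ 2 * C ^ 2 * c / m) ^ 2 := by
  set b := α ^ 2 * σ ^ 2 * C ^ 2
  have hb : 0 ≤ b := by positivity
  simp only [div_eq_mul_inv] at hκ ⊢
  calc κ * σ ^ 2 * m⁻¹ ≤ α ^ 2 * C ^ 2 * c * (1 + b * m⁻¹) * σ ^ 2 * m⁻¹ := by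
        gcongr
    _ = b * c * m⁻¹ + c * (b * m⁻¹) ^ 2 := by ring
    _ ≤ b * c * m⁻¹ + c ^ 2 * (b * m⁻¹) ^ 2 := by
        gcongr
        exact le_self_pow₀ hc two_ne_zero
    _ = b * c * m⁻¹ + (b * c * m⁻¹) ^ 2 := by ring

lemma mul_le_of_le_div_of_nonneg {a t φ : ℝ} (ha : 0 ≤ a) (hφ : 0 ≤ φ) (h : t ≤ φ / a) :
    a * t ≤ φ := by
  rcases ha.eq_or_lt with rfl | ha
  · simpa using hφ
  · rwa [le_div_iff₀' ha] at h

lemma sum_add_sq_le {ι : Type*} {s : Finset ι} {x : ι → ℝ} {φ : ℝ}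
    (hx : ∀ i ∈ s, 0 ≤ x i) (hφ : ∑ i ∈ s, x i ≤ φ) :
    ∑ i ∈ s, (x i + x i ^ 2) ≤ φ + φ ^ 2 := by
  have h0 : 0 ≤ ∑ i ∈ s, x i := sum_nonneg hx
  rw [sum_add_distrib]
  nlinarith [sum_sq_le_sq_sum_of_nonneg hx]

lemma sum_Ico_le_tsum_nat_add {f : ℕ → ℝ} (hf : ∀ i, 0 ≤ f i) (hs : Summable f) (n₀ n : ℕ) :
    ∑ i ∈ Ico n₀ n, f i ≤ ∑' i, f (n₀ + i) := by
  rw [sum_Ico_eq_sum_range]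
  exact (hs.comp_injective (add_right_injective n₀)).sum_le_tsum _ fun i _ => hf _

lemma one_sub_sum_mul_le_of_le_one_add_mul {E q : ℕ → ℝ} {n₀ : ℕ}
    (hE : ∀ n, 0 ≤ E n) (hq : ∀ n, 0 ≤ q n) (hrec : ∀ n, E (n + 1) ≤ (1 + q n) * E n)
    {n : ℕ} (hn : n₀ ≤ n) :
    (1 - ∑ i ∈ Ico n₀ n, q i) * E n ≤ E n₀ := by
  induction n, hn using Nat.le_induction with
  | base => simp
  | succ k hk ih =>
    rw [sum_Ico_succ_top hk]
    set S := ∑ i ∈ Ico n₀ k, q i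
    have hS : 0 ≤ S := sum_nonneg fun i _ => hq i
    rcases le_or_gt (1 - (S + q k)) 0 with hneg | hpos
    · nlinarith [hE n₀, hE (k + 1)]
    · -- `(1 - S - q) (1 + q) ≤ 1 - S` because the cross terms `-q (S + q)` are nonpositive
      calc (1 - (S + q k)) * E (k + 1) ≤ (1 - (S + q k)) * ((1 + q k) * E k) := by
            gcongr; exact hrec k
        _ ≤ (1 - S) * E k := by
            nlinarith [mul_nonneg (mul_nonneg (hq k) (add_nonneg hS (hq k))) (hE k)]
        _ ≤ E n₀ := ih

lemma le_div_one_sub_of_le_one_add_mul {E q : ℕ → ℝ} {n₀ : ℕ} {s : ℝ}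
    (hE : ∀ n, 0 ≤ E n) (hq : ∀ n, 0 ≤ q n) (hrec : ∀ n, E (n + 1) ≤ (1 + q n) * E n)
    (hsum : ∀ n, ∑ i ∈ Ico n₀ n, q i ≤ s) (hs : s < 1) {n : ℕ} (hn : n₀ ≤ n) :
    E n ≤ E n₀ / (1 - s) := by
  rw [le_div_iff₀ (by linarith)]
  nlinarith [one_sub_sum_mul_le_of_le_one_add_mul hE hq hrec hn, hsum n, hE n]

lemma one_add_integral_le_of_condExp_le {Ω : Type*} {m m₀ : MeasurableSpace Ω}
    {μ : Measure Ω} [IsProbabilityMeasure μ] (hm : m ≤ m₀) {f g r : Ω → ℝ} {c q : ℝ}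
    (hg : Integrable g μ) (hc : 0 ≤ c) (hr : ∀ ω, 0 ≤ r ω)
    (h : ∀ᵐ ω ∂μ, μ[f | m] ω ≤ g ω - c * r ω + q * (1 + g ω)) :
    1 + ∫ ω, f ω ∂μ ≤ (1 + q) * (1 + ∫ ω, g ω ∂μ) := by
  have h' : ∀ᵐ ω ∂μ, μ[f | m] ω ≤ g ω + q * (1 + g ω) :=
    h.mono fun ω hω => by nlinarith [mul_nonneg hc (hr ω)]
  have hone : Integrable (fun ω => 1 + g ω) μ := (integrable_const 1).add hg
  have hint : ∫ ω, μ[f | m] ω ∂μ ≤ ∫ ω, (g ω + q * (1 + g ω)) ∂μ :=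
    integral_mono_ae integrable_condExp (hg.add (hone.const_mul q)) h'
  rw [integral_condExp hm, integral_add hg (hone.const_mul q), integral_const_mul,
    integral_add (integrable_const 1) hg, integral_const, probReal_univ, one_smul] at hint
  linarith

theorem stmt_15_general {d : ℕ} {Ω : Type*} [mΩ : MeasurableSpace Ω]
    (μ : Measure Ω) [IsProbabilityMeasure μ]
    (proj : EuclideanSpace ℝ (Fin d) → EuclideanSpace ℝ (Fin d))
    (T : EuclideanSpace ℝ (Fin d) → EuclideanSpace ℝ (Fin d))
    (L : ℝ) (hL : 0 < L)
    -- the solution set, the projection onto it, and the induced distance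
    (projS : EuclideanSpace ℝ (Fin d) → EuclideanSpace ℝ (Fin d))
    -- uniform variance bound over the solution set
    (σhat : ℝ)
    -- step sizes and batch sizes
    (α : ℕ → ℝ) (αlow αup : ℝ) (hαlow : 0 < αlow) (hαup : Real.sqrt 2 * L * αup < 1)
    (hα : ∀ n, αlow ≤ α n ∧ α n ≤ αup)
    (mb : ℕ → ℕ)
    (hmb_sum : Summable fun n => ((mb n : ℝ))⁻¹)
    -- filtration and adapted iterates
    (𝓕 : ℕ → MeasurableSpace Ω) (h𝓕Ω : ∀ n, 𝓕 n ≤ mΩ)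
    (X : ℕ → Ω → EuclideanSpace ℝ (Fin d))
    (hdint : ∀ n, Integrable (fun ω => ‖projS (X n ω) - X n ω‖ ^ 2) μ)
    -- the distance version of the stochastic quasi-Fejér inequality
    (C₂ c₁ : ℝ) (hc₁ : 1 < c₁)
    (κ : ℕ → ℝ) (hκ0 : ∀ n, 0 ≤ κ n)
    (hFejer : ∀ n, ∀ᵐ ω ∂μ,
      condExp (𝓕 n) μ (fun ω' => ‖projS (X (n + 1) ω') - X (n + 1) ω'‖ ^ 2) ω
        ≤ ‖projS (X n ω) - X n ω‖ ^ 2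
          - ((1 - 2 * L ^ 2 * (α n) ^ 2) / 2) *
              ‖X n ω - proj (X n ω - α n • T (X n ω))‖ ^ 2
          + (κ n * σhat ^ 2 / (mb (n + 1))) * (1 + ‖projS (X n ω) - X n ω‖ ^ 2))
    (hκ : ∀ n, κ n ≤ αup ^ 2 * C₂ ^ 2 * c₁ * (1 + αup ^ 2 * σhat ^ 2 * C₂ ^ 2 / (mb (n + 1))))
    -- the constants `a`, `φ` and `n₀`
    (a φ : ℝ) (n₀ : ℕ)
    (ha : a = αup ^ 2 * σhat ^ 2 * C₂ ^ 2 * c₁)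
    (hφ : 0 < φ ∧ φ < (Real.sqrt 5 - 1) / 2)
    (hn₀ : ∑' i : ℕ, ((mb (n₀ + i + 1) : ℝ))⁻¹ ≤ φ / a) :
    ∀ n, n₀ + 1 ≤ n →
      ∫ ω, ‖projS (X n ω) - X n ω‖ ^ 2 ∂μ
        ≤ (1 + ∫ ω, ‖projS (X n₀ ω) - X n₀ ω‖ ^ 2 ∂μ) / (1 - φ - φ ^ 2) := by
  intro n hn
  set D : ℕ → ℝ := fun n => ∫ ω, ‖projS (X n ω) - X n ω‖ ^ 2 ∂μ
  set q : ℕ → ℝ := fun n => κ n * σhat ^ 2 / mb (n + 1)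
  have hD : ∀ n, 0 ≤ 1 + D n := fun n => by positivity
  have hq : ∀ n, 0 ≤ q n := fun n => by have := hκ0 n; positivity
  have hrec : ∀ n, 1 + D (n + 1) ≤ (1 + q n) * (1 + D n) := fun n =>
    one_add_integral_le_of_condExp_le (h𝓕Ω n) (hdint n)
      (by linarith [two_mul_sq_mul_sq_lt_one hL.le (hαlow.le.trans (hα n).1) (hα n).2 hαup])
      (fun ω => sq_nonneg _) (hFejer n)
  have ha0 : 0 ≤ a := by rw [ha]; have := hc₁.le; positivity
  have hsum : ∀ n, ∑ i ∈ Ico n₀ n, q i ≤ φ + φ ^ 2 := fun n => by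
    have hv : ∀ i, 0 ≤ ((mb (i + 1) : ℝ))⁻¹ := fun i => by positivity
    calc ∑ i ∈ Ico n₀ n, q i ≤ ∑ i ∈ Ico n₀ n, (a / mb (i + 1) + (a / mb (i + 1)) ^ 2) :=
          sum_le_sum fun i _ => ha ▸ mul_sq_div_le hc₁.le (Nat.cast_nonneg _) (hκ i)
      _ ≤ φ + φ ^ 2 := by
          refine sum_add_sq_le (fun i _ => by positivity) ?_
          simp only [div_eq_mul_inv, ← mul_sum]
          exact mul_le_of_le_div_of_nonneg ha0 hφ.1.le <|
            (sum_Ico_le_tsum_nat_add hv ((summable_nat_add_iff 1).mpr hmb_sum) n₀ n).trans hn₀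
  have := le_div_one_sub_of_le_one_add_mul hD hq hrec hsum (add_sq_lt_one hφ.1.le hφ.2)
    (n := n) (by omega)
  rw [sub_sub]
  linarith

/-- Boundedness of the expected squared distance of the SFBF iterates to the solution set
under a uniform variance bound over the solution set (Proposition 5.2). -/
theorem stmt_15 {d : ℕ} {Ω : Type*} [mΩ : MeasurableSpace Ω]
    (μ : Measure Ω) [IsProbabilityMeasure μ]
    (𝒳 : Set (EuclideanSpace ℝ (Fin d)))
    (h𝒳ne : 𝒳.Nonempty) (h𝒳cl : IsClosed 𝒳) (h𝒳cv : Convex ℝ 𝒳)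
    (proj : EuclideanSpace ℝ (Fin d) → EuclideanSpace ℝ (Fin d))
    (hproj_mem : ∀ x, proj x ∈ 𝒳)
    (hproj_char : ∀ x, ∀ y ∈ 𝒳, ⟪x - proj x, y - proj x⟫ ≤ 0)
    (T : EuclideanSpace ℝ (Fin d) → EuclideanSpace ℝ (Fin d))
    (L : ℝ) (hL : 0 < L)
    (hLip : ∀ x y, ‖T x - T y‖ ≤ L * ‖x - y‖)
    (hpm : ∀ x y, 0 ≤ ⟪T x, y - x⟫ → 0 ≤ ⟪T y, y - x⟫)
    -- the solution set, the projection onto it, and the induced distance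
    (Xstar : Set (EuclideanSpace ℝ (Fin d)))
    (hXstar : Xstar = {x | x ∈ 𝒳 ∧ ∀ y ∈ 𝒳, 0 ≤ ⟪T x, y - x⟫})
    (hXstar_ne : Xstar.Nonempty)
    (projS : EuclideanSpace ℝ (Fin d) → EuclideanSpace ℝ (Fin d))
    (hprojS_mem : ∀ x, projS x ∈ Xstar)
    (hprojS_char : ∀ x, ∀ y ∈ Xstar, ⟪x - projS x, y - projS x⟫ ≤ 0)
    -- uniform variance bound over the solution set
    (σ : EuclideanSpace ℝ (Fin d) → ℝ) (σ₀ σhat : ℝ) (hσ₀ : 0 ≤ σ₀)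
    (hσhat : ∀ xs ∈ Xstar, max (σ xs) σ₀ ≤ σhat)
    -- step sizes and batch sizes
    (α : ℕ → ℝ) (αlow αup : ℝ) (hαlow : 0 < αlow) (hαup : Real.sqrt 2 * L * αup < 1)
    (hα : ∀ n, αlow ≤ α n ∧ α n ≤ αup)
    (mb : ℕ → ℕ) (hmb : ∀ n, 1 ≤ mb n)
    (hmb_sum : Summable fun n => ((mb n : ℝ))⁻¹)
    -- filtration and adapted iterates
    (𝓕 : ℕ → MeasurableSpace Ω) (h𝓕mono : ∀ n, 𝓕 n ≤ 𝓕 (n + 1)) (h𝓕Ω : ∀ n, 𝓕 n ≤ mΩ)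
    (X : ℕ → Ω → EuclideanSpace ℝ (Fin d))
    (hXad : ∀ n, StronglyMeasurable[𝓕 n] (X n))
    (hdint : ∀ n, Integrable (fun ω => ‖projS (X n ω) - X n ω‖ ^ 2) μ)
    (hrint : ∀ n, Integrable
      (fun ω => ‖X n ω - proj (X n ω - α n • T (X n ω))‖ ^ 2) μ)
    -- the distance version of the stochastic quasi-Fejér inequality
    (C₂ c₁ : ℝ) (hC₂ : 0 < C₂) (hc₁ : 1 < c₁)
    (κ : ℕ → ℝ) (hκ0 : ∀ n, 0 ≤ κ n)
    (hFejer : ∀ n, ∀ᵐ ω ∂μ,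
      condExp (𝓕 n) μ (fun ω' => ‖projS (X (n + 1) ω') - X (n + 1) ω'‖ ^ 2) ω
        ≤ ‖projS (X n ω) - X n ω‖ ^ 2
          - ((1 - 2 * L ^ 2 * (α n) ^ 2) / 2) *
              ‖X n ω - proj (X n ω - α n • T (X n ω))‖ ^ 2
          + (κ n * σhat ^ 2 / (mb (n + 1))) * (1 + ‖projS (X n ω) - X n ω‖ ^ 2))
    (hκ : ∀ n, κ n ≤ αup ^ 2 * C₂ ^ 2 * c₁ * (1 + αup ^ 2 * σhat ^ 2 * C₂ ^ 2 / (mb (n + 1))))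
    -- the constants `a`, `φ` and `n₀`
    (a φ : ℝ) (n₀ : ℕ) (hn₀1 : 1 ≤ n₀)
    (ha : a = αup ^ 2 * σhat ^ 2 * C₂ ^ 2 * c₁)
    (hφ : 0 < φ ∧ φ < (Real.sqrt 5 - 1) / 2)
    (hn₀ : ∑' i : ℕ, ((mb (n₀ + i + 1) : ℝ))⁻¹ ≤ φ / a) :
    ∀ n, n₀ + 1 ≤ n →
      ∫ ω, ‖projS (X n ω) - X n ω‖ ^ 2 ∂μ
        ≤ (1 + ∫ ω, ‖projS (X n₀ ω) - X n₀ ω‖ ^ 2 ∂μ) / (1 - φ - φ ^ 2) :=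
  stmt_15_general (mΩ := mΩ) μ proj T L hL projS σhat α αlow αup hαlow hαup hα mb hmb_sum 𝓕 h𝓕Ω X
    hdint C₂ c₁ hc₁ κ hκ0 hFejer hκ a φ n₀ ha hφ hn₀
end
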